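/- arXiv:1908.05556 — 11 statements merged into one kernel-verified Lean document; each statement's English description precedes it below -/
import Mathlib

section
/- Let k be a Markov transition on {0,1}, represented by the pair (k0, k1) in [0,1]^2 where ks is the probability of transitioning from s to 1. Let p, q ∈ [0,1] with p ≥ q and p > 0. Then k is monotone (k1 ≥ k0) and satisfies p·k1 + (1−p)·k0 = q if and only if there exists λ ∈ [0,1] such that k0 = (1−λ)·q and k1 = λ·(q/p) + (1−λ)·q. -/
/-- characterization of monotone Markov transitions on {0,1} mapping
Bernoulli(p) to Bernoulli(q), when p ≥ q and p > 0. -/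
theorem stmt0 (p q k0 k1 : ℝ)
    (hp0 : 0 ≤ p) (hp1 : p ≤ 1) (hq0 : 0 ≤ q) (hq1 : q ≤ 1)
    (hk00 : 0 ≤ k0) (hk01 : k0 ≤ 1) (hk10 : 0 ≤ k1) (hk11 : k1 ≤ 1)
    (hpq : p ≥ q) (hppos : 0 < p) :
    (k1 ≥ k0 ∧ p * k1 + (1 - p) * k0 = q) ↔
      ∃ l : ℝ, 0 ≤ l ∧ l ≤ 1 ∧ k0 = (1 - l) * q ∧ k1 = l * (q / p) + (1 - l) * q := by
  constructor
  · rintro ⟨hmono, heq⟩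
    rcases eq_or_lt_of_le hq0 with hq | hq
    · -- q = 0
      have hq' : q = 0 := hq.symm
      subst hq'
      have hk1 : k1 = 0 := by nlinarith
      have hk0 : k0 = 0 := le_antisymm (hk1 ▸ hmono) hk00
      exact ⟨0, le_refl 0, zero_le_one, by simp [hk0], by simp [hk1]⟩
    · refine ⟨1 - k0 / q, ?_, ?_, ?_, ?_⟩
      · have : k0 ≤ q := by nlinarith
        have := div_le_one_of_le₀ this hq0
        linarith
      · have : 0 ≤ k0 / q := div_nonneg hk00 hq0
        linarith
      · field_simp; ring
      · have h1 : k1 = (q - (1 - p) * k0) / p := by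
          field_simp; linarith
        rw [h1]; field_simp; ring
  · rintro ⟨l, hl0, hl1, hk0, hk1⟩
    constructor
    · rw [hk0, hk1]
      have : q / p ≥ q := by
        rw [ge_iff_le, le_div_iff₀ hppos]; nlinarith
      nlinarith
    · rw [hk0, hk1]
      field_simp
      ring
end

section
/- Fix a type space Θ, a set of tests T, and a passage rate π : T × Θ → [0,1]. Fix θ ∈ Θ and tests τ, ψ with π(τ|θ) ≥ π(ψ|θ). Then τ is more θ-discerning than ψ if and only if there exists λ ∈ [0,1] such that for all θ' ∈ Θ: [λ·π(τ|θ') + (1−λ)·π(τ|θ)]·π(ψ|θ) ≤ π(ψ|θ')·π(τ|θ). -/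
/-- Test `τ` is more `θ`-discerning than `ψ`: there is a monotone Markov transition
`(k0, k1)` on `{0,1}` converting `τ`-scores into `ψ`-scores fairly for `θ` and
unfavorably for all other types. -/
def MoreDiscerning {Θ T : Type*} (π : T → Θ → ℝ) (θ : Θ) (τ ψ : T) : Prop :=
  ∃ k0 k1 : ℝ, 0 ≤ k0 ∧ k0 ≤ 1 ∧ 0 ≤ k1 ∧ k1 ≤ 1 ∧ k1 ≥ k0 ∧
    π τ θ * k1 + (1 - π τ θ) * k0 = π ψ θ ∧
    ∀ θ' : Θ, θ' ≠ θ → π τ θ' * k1 + (1 - π τ θ') * k0 ≤ π ψ θ'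

/-- Discernment order characterization in the case π(τ|θ) ≥ π(ψ|θ). -/
theorem stmt2 {Θ T : Type*} (π : T → Θ → ℝ)
    (hπ : ∀ t θ', 0 ≤ π t θ' ∧ π t θ' ≤ 1)
    (θ : Θ) (τ ψ : T) (hcase : π τ θ ≥ π ψ θ) :
    MoreDiscerning π θ τ ψ ↔
      ∃ l : ℝ, 0 ≤ l ∧ l ≤ 1 ∧ ∀ θ' : Θ,
        (l * π τ θ' + (1 - l) * π τ θ) * π ψ θ ≤ π ψ θ' * π τ θ := by
  obtain ⟨ha0, ha1⟩ := hπ τ θ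
  obtain ⟨hb0, hb1⟩ := hπ ψ θ
  constructor
  · rintro ⟨k0, k1, hk00, hk01, hk10, hk11, hk, heq, hle⟩
    by_cases hb : π ψ θ = 0
    · refine ⟨0, le_refl _, zero_le_one, fun θ' => ?_⟩
      rw [hb]
      simpa using mul_nonneg (hπ ψ θ').1 ha0
    · have hbpos : 0 < π ψ θ := lt_of_le_of_ne hb0 (Ne.symm hb)
      have hlb : π τ θ * (k1 - k0) / π ψ θ * π ψ θ = π τ θ * (k1 - k0) :=
        div_mul_cancel₀ _ hb
      refine ⟨π τ θ * (k1 - k0) / π ψ θ, ?_, ?_, fun θ' => ?_⟩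
      · exact div_nonneg (mul_nonneg ha0 (by linarith)) hb0
      · rw [div_le_one hbpos]; nlinarith
      · have e1 : π τ θ * (k1 - k0) / π ψ θ * π ψ θ * π τ θ' =
            π τ θ * (k1 - k0) * π τ θ' := by rw [hlb]
        have e2 : π τ θ * (k1 - k0) / π ψ θ * π ψ θ * π τ θ =
            π τ θ * (k1 - k0) * π τ θ := by rw [hlb]
        have e3 : π τ θ * π ψ θ = π τ θ * (π τ θ * k1 + (1 - π τ θ) * k0) := by
          rw [heq]
        by_cases hθ : θ' = θ
        · subst hθ; nlinarith
        · have h := hle θ' hθ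
          have h2 := mul_le_mul_of_nonneg_left h ha0
          nlinarith [e1, e2, e3, h2]
  · rintro ⟨l, hl0, hl1, hl⟩
    by_cases ha : π τ θ = 0
    · have hb : π ψ θ = 0 := le_antisymm (ha ▸ hcase) hb0
      exact ⟨0, 0, le_refl _, zero_le_one, le_refl _, zero_le_one, le_refl _,
        by rw [hb]; ring, fun θ' _ => by simpa using (hπ ψ θ').1⟩
    · have hapos : 0 < π τ θ := lt_of_le_of_ne ha0 (Ne.symm ha)
      refine ⟨π ψ θ * (1 - l), π ψ θ * (1 - l) + l * π ψ θ / π τ θ, ?_, ?_, ?_, ?_, ?_, ?_,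
        fun θ' _ => ?_⟩
      · exact mul_nonneg hb0 (by linarith)
      · nlinarith
      · have h1 : 0 ≤ π ψ θ * (1 - l) := mul_nonneg hb0 (by linarith)
        have h2 : 0 ≤ l * π ψ θ / π τ θ := by positivity
        linarith
      · have h3 : l * π ψ θ / π τ θ ≤ l := by
          rw [div_le_iff₀ hapos]; nlinarith
        nlinarith [h3]
      · have h2 : 0 ≤ l * π ψ θ / π τ θ := by positivity
        linarith
      · field_simp
        ring
      · have e : (π τ θ' * (π ψ θ * (1 - l) + l * π ψ θ / π τ θ) +
            (1 - π τ θ') * (π ψ θ * (1 - l))) * π τ θ =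
            (l * π τ θ' + (1 - l) * π τ θ) * π ψ θ := by
          field_simp
          ring
        exact le_of_mul_le_mul_right (by rw [e]; exact hl θ') hapos
end

section
/- Fix θ ∈ Θ and tests τ, ψ with π(τ|θ) < π(ψ|θ), and write π̄ = 1 − π. Then τ ⪰_θ ψ if and only if there exists λ ∈ [0,1] such that for all θ' ∈ Θ: [λ·π̄(τ|θ') + (1−λ)·π̄(τ|θ)]·π̄(ψ|θ) ≥ π̄(ψ|θ')·π̄(τ|θ). -/
/-- Discernment order characterization in the case π(τ|θ) < π(ψ|θ),
expressed in terms of failure rates π̄ = 1 − π. -/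
theorem stmt3 {Θ T : Type*} (π : T → Θ → ℝ)
    (hπ : ∀ t θ', 0 ≤ π t θ' ∧ π t θ' ≤ 1)
    (θ : Θ) (τ ψ : T) (hcase : π τ θ < π ψ θ) :
    MoreDiscerning π θ τ ψ ↔
      ∃ l : ℝ, 0 ≤ l ∧ l ≤ 1 ∧ ∀ θ' : Θ,
        (l * (1 - π τ θ') + (1 - l) * (1 - π τ θ)) * (1 - π ψ θ) ≥
          (1 - π ψ θ') * (1 - π τ θ) := by
  obtain ⟨hp0, hp1⟩ := hπ τ θ
  obtain ⟨hq0, hq1⟩ := hπ ψ θ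
  have hp1' : π τ θ < 1 := lt_of_lt_of_le hcase hq1
  have hp' : (0:ℝ) < 1 - π τ θ := by linarith
  constructor
  · rintro ⟨k0, k1, hk00, hk01, hk10, hk11, hk, heq, hle⟩
    by_cases hq : π ψ θ = 1
    · -- then k0 = k1 = 1 is forced, λ = 0 works
      have hk0eq : k0 = 1 := by nlinarith [mul_nonneg hp0 (by linarith : (0:ℝ) ≤ 1 - k1)]
      have hk1eq : k1 = 1 := le_antisymm hk11 (hk0eq ▸ hk)
      refine ⟨0, le_refl 0, zero_le_one, fun θ' => ?_⟩
      by_cases hθ : θ' = θ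
      · subst hθ; rw [hq]; ring_nf; nlinarith
      · have h := hle θ' hθ
        rw [hk0eq, hk1eq] at h
        obtain ⟨hx0, hx1⟩ := hπ τ θ'
        rw [hq]
        nlinarith
    · have hq' : (0:ℝ) < 1 - π ψ θ := lt_of_le_of_ne (by linarith) (by intro h; exact hq (by linarith))
      refine ⟨(k1 - k0) * (1 - π τ θ) / (1 - π ψ θ), ?_, ?_, fun θ' => ?_⟩
      · exact div_nonneg (mul_nonneg (by linarith) (by linarith)) (le_of_lt hq')
      · rw [div_le_one hq']
        nlinarith
      · set l := (k1 - k0) * (1 - π τ θ) / (1 - π ψ θ) with hl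
        have hlq : l * (1 - π ψ θ) = (k1 - k0) * (1 - π τ θ) := by
          rw [hl]; field_simp
        by_cases hθ : θ' = θ
        · subst hθ; nlinarith [hlq]
        · have h1 : π ψ θ + (k1 - k0) * (π τ θ' - π τ θ) ≤ π ψ θ' := by
            nlinarith [hle θ' hθ, heq]
          have h2 : l * (1 - π ψ θ) * (π τ θ - π τ θ') =
              (k1 - k0) * (1 - π τ θ) * (π τ θ - π τ θ') := by rw [hlq]
          nlinarith [mul_le_mul_of_nonneg_left h1 (le_of_lt hp'), h2]
  · rintro ⟨l, hl0, hl1, hall⟩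
    set d := l * (1 - π ψ θ) / (1 - π τ θ) with hdl
    have hd : d * (1 - π τ θ) = l * (1 - π ψ θ) := by rw [hdl]; field_simp
    have hd0 : 0 ≤ d := div_nonneg (mul_nonneg hl0 (by linarith)) (le_of_lt hp')
    refine ⟨π ψ θ - π τ θ * d, π ψ θ + (1 - π τ θ) * d, ?_, ?_, ?_, ?_, ?_, by ring, fun θ' _ => ?_⟩
    · -- 0 ≤ q - p*d
      nlinarith [hd, mul_nonneg (mul_nonneg hp0 (by linarith : (0:ℝ) ≤ 1 - π ψ θ)) (by linarith : (0:ℝ) ≤ 1 - l)]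
    · nlinarith [mul_nonneg hp0 hd0]
    · nlinarith [mul_nonneg (le_of_lt hp') hd0]
    · -- q + (1-p)d ≤ 1 since (1-p)d = l(1-q) ≤ 1-q
      nlinarith [hd, mul_nonneg (by linarith : (0:ℝ) ≤ 1 - l) (by linarith : (0:ℝ) ≤ 1 - π ψ θ)]
    · nlinarith [mul_nonneg hp0 hd0, mul_nonneg (le_of_lt hp') hd0, hd0]
    · -- x*k1 + (1-x)*k0 = q + (x-p)*d ≤ y
      have key : (π τ θ' - π τ θ) * (d * (1 - π τ θ)) ≤ (π ψ θ' - π ψ θ) * (1 - π τ θ) := by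
        rw [hd]
        nlinarith [hall θ']
      nlinarith [key, hp']
end

section
/- Suppose π(τ|θ) ≥ π(τ|θ') for all θ' ∈ Θ and all passage rates involved are strictly between 0 and 1. Then τ ⪰_θ ψ with π(τ|θ) ≥ π(ψ|θ) holds if and only if π(τ|θ)/π(τ|θ') ≥ π(ψ|θ)/π(ψ|θ') for all θ'; and τ ⪰_θ ψ with π(τ|θ) < π(ψ|θ) holds if and only if (1−π(τ|θ))/(1−π(τ|θ')) ≤ (1−π(ψ|θ))/(1−π(ψ|θ')) for all θ'. -/
/-- when θ maximizes π(τ|·) and passage rates are interior, discernment is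
characterized by ratios of passage rates (resp. failure rates). -/
theorem stmt5 {Θ T : Type*} (π : T → Θ → ℝ)
    (θ : Θ) (τ ψ : T)
    (hint : ∀ t θ', 0 < π t θ' ∧ π t θ' < 1)
    (hmax : ∀ θ' : Θ, π τ θ ≥ π τ θ') :
    (π τ θ ≥ π ψ θ →
      (MoreDiscerning π θ τ ψ ↔ ∀ θ' : Θ, π τ θ / π τ θ' ≥ π ψ θ / π ψ θ')) ∧
    (π τ θ < π ψ θ →
      (MoreDiscerning π θ τ ψ ↔
        ∀ θ' : Θ, (1 - π τ θ) / (1 - π τ θ') ≤ (1 - π ψ θ) / (1 - π ψ θ'))) := by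
  obtain ⟨hτθ0, hτθ1⟩ := hint τ θ
  obtain ⟨hψθ0, hψθ1⟩ := hint ψ θ
  constructor
  · intro hge
    constructor
    · rintro ⟨k0, k1, hk00, hk01, hk10, hk11, hk, heq, hall⟩ θ'
      obtain ⟨hτ'0, hτ'1⟩ := hint τ θ'
      obtain ⟨hψ'0, hψ'1⟩ := hint ψ θ'
      by_cases h : θ' = θ
      · subst h; rw [div_self hτθ0.ne', div_self hψθ0.ne']
      · rw [ge_iff_le, div_le_div_iff₀ hψ'0 hτ'0]
        have h1 := hall θ' h
        have h2 := hmax θ'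
        nlinarith [mul_le_mul_of_nonneg_left h1 hτθ0.le,
          mul_nonneg hk00 (sub_nonneg.2 h2)]
    · intro h
      refine ⟨0, π ψ θ / π τ θ, le_refl _, zero_le_one, by positivity,
        (div_le_one hτθ0).2 hge, by positivity, by field_simp; ring, ?_⟩
      intro θ' _
      obtain ⟨hτ'0, hτ'1⟩ := hint τ θ'
      obtain ⟨hψ'0, hψ'1⟩ := hint ψ θ'
      have hx := h θ'
      rw [ge_iff_le, div_le_div_iff₀ hψ'0 hτ'0] at hx
      have : π τ θ' * (π ψ θ / π τ θ) ≤ π ψ θ' := by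
        rw [← mul_div_assoc, div_le_iff₀ hτθ0]
        nlinarith
      linarith
  · intro hlt
    constructor
    · rintro ⟨k0, k1, hk00, hk01, hk10, hk11, hk, heq, hall⟩ θ'
      obtain ⟨hτ'0, hτ'1⟩ := hint τ θ'
      obtain ⟨hψ'0, hψ'1⟩ := hint ψ θ'
      by_cases h : θ' = θ
      · subst h
        rw [div_self (sub_pos.2 hτθ1).ne', div_self (sub_pos.2 hψθ1).ne']
      · rw [div_le_div_iff₀ (by linarith) (by linarith)]
        have h1 := hall θ' h
        have h2 := hmax θ'
        nlinarith [mul_le_mul_of_nonneg_left h1 (by linarith : (0:ℝ) ≤ 1 - π τ θ),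
          mul_nonneg (sub_nonneg.2 hk11) (sub_nonneg.2 h2)]
    · intro h
      have h1 : (0:ℝ) < 1 - π τ θ := by linarith
      refine ⟨(π ψ θ - π τ θ) / (1 - π τ θ), 1, div_nonneg (by linarith) (by linarith),
        (div_le_one h1).2 (by linarith), zero_le_one, le_refl _,
        (div_le_one h1).2 (by linarith), by field_simp; ring, ?_⟩
      intro θ' _
      obtain ⟨hτ'0, hτ'1⟩ := hint τ θ'
      obtain ⟨hψ'0, hψ'1⟩ := hint ψ θ'
      have hx := h θ'
      rw [div_le_div_iff₀ (by linarith) (by linarith)] at hx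
      have : (1 - π τ θ') * ((π ψ θ - π τ θ) / (1 - π τ θ)) ≤ π ψ θ' - π τ θ' := by
        rw [← mul_div_assoc, div_le_iff₀ h1]
        nlinarith
      linarith
end

section
/- Let α : Θ × Θ → [0,1] be an authentication rate with α(θ|θ) ≥ α(θ|θ') for all θ, θ'. Then α is most discerning if and only if α(θ3|θ2)·α(θ2|θ1) ≤ α(θ3|θ1)·α(θ2|θ2) for all θ1, θ2, θ3 ∈ Θ. -/
/-- An authentication rate `α` (with `α θ' θ` the probability that type `θ` is
authenticated when reporting `θ'`) is most discerning. -/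
def MostDiscerningAuth {Θ : Type*} (α : Θ → Θ → ℝ) : Prop :=
  ∀ θ2 θ3 : Θ,
    (α θ2 θ2 ≥ α θ2 θ3 →
      ∃ l : ℝ, 0 ≤ l ∧ l ≤ 1 ∧ ∀ θ1 : Θ,
        (l * α θ2 θ1 + (1 - l) * α θ2 θ2) * α θ3 θ2 ≤ α θ3 θ1 * α θ2 θ2) ∧
    (α θ2 θ2 < α θ2 θ3 →
      ∃ l : ℝ, 0 ≤ l ∧ l ≤ 1 ∧ ∀ θ1 : Θ,
        (l * (1 - α θ2 θ1) + (1 - l) * (1 - α θ2 θ2)) * (1 - α θ3 θ2) ≥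
          (1 - α θ3 θ1) * (1 - α θ2 θ2))

/-- if α(θ|θ) ≥ α(θ|θ') for all θ, θ', then α is most discerning iff the
multiplicative transitivity inequality holds. -/
theorem stmt7 {Θ : Type*} (α : Θ → Θ → ℝ)
    (hα : ∀ θ' θ : Θ, 0 ≤ α θ' θ ∧ α θ' θ ≤ 1)
    (hdiag : ∀ θ θ' : Θ, α θ θ ≥ α θ θ') :
    MostDiscerningAuth α ↔
      ∀ θ1 θ2 θ3 : Θ, α θ3 θ2 * α θ2 θ1 ≤ α θ3 θ1 * α θ2 θ2 := by
  constructor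
  · intro hmd θ1 θ2 θ3
    obtain ⟨h1, _⟩ := hmd θ2 θ3
    obtain ⟨l, hl0, hl1, hineq⟩ := h1 (hdiag θ2 θ3)
    have h := hineq θ1
    have hb : 0 ≤ α θ3 θ2 := (hα θ3 θ2).1
    have had : α θ2 θ1 ≤ α θ2 θ2 := hdiag θ2 θ1
    have hconv : α θ2 θ1 ≤ l * α θ2 θ1 + (1 - l) * α θ2 θ2 := by nlinarith
    nlinarith
  · intro hineq θ2 θ3
    constructor
    · intro _
      exact ⟨1, by norm_num, by norm_num, fun θ1 => by
        have := hineq θ1 θ2 θ3; nlinarith⟩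
    · intro hlt
      exact absurd (hdiag θ2 θ3) (not_le.mpr hlt)
end

section
/- Let Θ = [θ̲, θ̄] ⊂ ℝ and let α : Θ × Θ → [0,1] satisfy α(θ|θ) = 1 for all θ, and the transitivity inequality α(θ3|θ2)·α(θ2|θ1) ≤ α(θ3|θ1) for all θ1, θ2, θ3. Suppose for each θ' the function θ ↦ α(θ'|θ) is absolutely continuous with one-sided derivatives on the diagonal, and let λ₊(θ) = −D₂₊α(θ|θ) and λ₋(θ) = D₂₋α(θ|θ) be integrable. Define Λ(θ'|θ) = exp(−∫_{θ'}^{θ} λ₊(s) ds) for θ ≥ θ' and Λ(θ'|θ) = exp(−∫_{θ}^{θ'} λ₋(s) ds) for θ < θ'. Then α(θ'|θ) ≥ Λ(θ'|θ) for all θ', θ. -/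
open MeasureTheory intervalIntegral

open Filter Set in
private lemma stmt9.avg_bound_aux (G : ℝ → ℝ) (hG : MeasureTheory.Integrable G) {a b p : ℝ}
    (hab : a < b) :
    ‖(b - a)⁻¹ * (∫ t in a..b, G t) - G p‖ ≤ ⨍ y in Icc a b, ‖G y - G p‖ := by
  have hible : IntervalIntegrable G volume a b := hG.intervalIntegrable
  have hba : (0:ℝ) ≤ (b - a)⁻¹ := inv_nonneg.2 (by linarith)
  have h1 : (b - a)⁻¹ * (∫ t in a..b, G t) - G p
      = (b - a)⁻¹ * (∫ t in a..b, (G t - G p)) := by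
    rw [intervalIntegral.integral_sub hible intervalIntegrable_const,
        intervalIntegral.integral_const]
    have : b - a ≠ 0 := by linarith
    field_simp
    rw [smul_eq_mul]
  rw [h1, setAverage_eq]
  have hvol : (volume (Icc a b)).toReal = b - a := by
    rw [Real.volume_Icc, ENNReal.toReal_ofReal (by linarith)]
  rw [measureReal_def, hvol, smul_eq_mul]
  have h2 : ‖(b - a)⁻¹ * (∫ t in a..b, (G t - G p))‖
      = (b - a)⁻¹ * ‖∫ t in a..b, (G t - G p)‖ := by
    rw [norm_mul, Real.norm_eq_abs (((b:ℝ) - a)⁻¹), abs_of_nonneg hba]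
  rw [h2]
  have h3 : ‖∫ t in a..b, (G t - G p)‖ ≤ ∫ t in a..b, ‖G t - G p‖ :=
    intervalIntegral.norm_integral_le_integral_norm hab.le
  have h4 : ∫ t in a..b, ‖G t - G p‖ = ∫ y in Icc a b, ‖G y - G p‖ := by
    rw [intervalIntegral.integral_of_le hab.le, ← MeasureTheory.integral_Icc_eq_integral_Ioc]
  rw [← h4]
  exact mul_le_mul_of_nonneg_left h3 hba

open Filter Set in
private lemma stmt9.lebesgue_aux (G : ℝ → ℝ) (hG : MeasureTheory.Integrable G) :
    ∀ᵐ x : ℝ, (Filter.Tendsto (fun u => (u - x)⁻¹ * ∫ t in x..u, G t) (nhdsWithin x (Set.Ioi x))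
        (nhds (G x))) ∧
      (Filter.Tendsto (fun u => (u - x)⁻¹ * ∫ t in x..u, G t) (nhdsWithin x (Set.Iio x))
        (nhds (G x))) := by
  have hloc := (IsUnifLocDoublingMeasure.vitaliFamily (volume : Measure ℝ)
    1).ae_tendsto_average_norm_sub hG.locallyIntegrable
  filter_upwards [hloc] with x hx
  have hR : Filter.Tendsto (fun u => ⨍ y in Icc x u, ‖G y - G x‖) (nhdsWithin x (Set.Ioi x))
      (nhds 0) := hx.comp (Real.tendsto_Icc_vitaliFamily_right x)
  have hL : Filter.Tendsto (fun u => ⨍ y in Icc u x, ‖G y - G x‖) (nhdsWithin x (Set.Iio x))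
      (nhds 0) := hx.comp (Real.tendsto_Icc_vitaliFamily_left x)
  constructor
  · rw [← tendsto_sub_nhds_zero_iff]
    apply squeeze_zero_norm' _ hR
    filter_upwards [self_mem_nhdsWithin] with u (hu : x < u)
    exact stmt9.avg_bound_aux G hG hu
  · rw [← tendsto_sub_nhds_zero_iff]
    apply squeeze_zero_norm' _ hL
    filter_upwards [self_mem_nhdsWithin] with u (hu : u < x)
    have : (u - x)⁻¹ * ∫ t in x..u, G t = (x - u)⁻¹ * ∫ t in u..x, G t := by
      rw [intervalIntegral.integral_symm u x]
      have h1 : (u - x)⁻¹ = -((x - u)⁻¹) := by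
        rw [show u - x = -(x - u) by ring, inv_neg]
      rw [h1]; ring
    rw [this]
    exact stmt9.avg_bound_aux G hG hu

/-- lower bound α ≥ Λ for a most-discerning authentication rate on an
interval. Absolute continuity of θ ↦ α(θ'|θ) is expressed via a fundamental-theorem-of-
calculus representation with an integrable density. -/
theorem stmt9 (tl th : ℝ) (hlt : tl ≤ th) (α : ℝ → ℝ → ℝ)
    (hα : ∀ θ' ∈ Set.Icc tl th, ∀ θ ∈ Set.Icc tl th, 0 ≤ α θ' θ ∧ α θ' θ ≤ 1)
    (hdiag : ∀ θ ∈ Set.Icc tl th, α θ θ = 1)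
    (htrans : ∀ θ1 ∈ Set.Icc tl th, ∀ θ2 ∈ Set.Icc tl th, ∀ θ3 ∈ Set.Icc tl th,
      α θ3 θ2 * α θ2 θ1 ≤ α θ3 θ1)
    (hAC : ∀ θ' ∈ Set.Icc tl th, ∃ g : ℝ → ℝ, IntegrableOn g (Set.Icc tl th) ∧
      ∀ θ ∈ Set.Icc tl th, α θ' θ = α θ' tl + ∫ t in tl..θ, g t)
    (lamp lamm : ℝ → ℝ)
    -- λ₊(θ) = −D₂₊α(θ|θ): right derivative of t ↦ α θ t at t = θ is −λ₊(θ)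
    (hlamp : ∀ θ ∈ Set.Icc tl th, HasDerivWithinAt (fun t => α θ t) (-(lamp θ)) (Set.Ici θ) θ)
    -- λ₋(θ) = D₂₋α(θ|θ): left derivative of t ↦ α θ t at t = θ is λ₋(θ)
    (hlamm : ∀ θ ∈ Set.Icc tl th, HasDerivWithinAt (fun t => α θ t) (lamm θ) (Set.Iic θ) θ)
    (hlampint : IntegrableOn lamp (Set.Icc tl th))
    (hlammint : IntegrableOn lamm (Set.Icc tl th))
    (Λ : ℝ → ℝ → ℝ)
    (hΛ : ∀ θ' θ : ℝ, Λ θ' θ =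
      if θ' ≤ θ then Real.exp (-(∫ s in θ'..θ, lamp s))
      else Real.exp (-(∫ s in θ..θ', lamm s))) :
    ∀ θ' ∈ Set.Icc tl th, ∀ θ ∈ Set.Icc tl th, Λ θ' θ ≤ α θ' θ := by
  -- nonnegativity of λ₊ on [tl, th)
  have lamp_nonneg : ∀ x ∈ Set.Ico tl th, 0 ≤ lamp x := by
    intro x hx
    have hxI : x ∈ Set.Icc tl th := ⟨hx.1, hx.2.le⟩
    have hs := hlamp x hxI
    rw [hasDerivWithinAt_iff_tendsto_slope, Set.Ici_sdiff_left] at hs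
    have hev : ∀ᶠ u in nhdsWithin x (Set.Ioi x), slope (fun t => α x t) x u ≤ 0 := by
      filter_upwards [Ioc_mem_nhdsGT_of_mem ⟨le_refl x, hx.2⟩] with u hu
      have huI : u ∈ Set.Icc tl th := ⟨le_trans hxI.1 hu.1.le, hu.2⟩
      rw [slope_def_field, hdiag x hxI]
      apply div_nonpos_of_nonpos_of_nonneg
      · linarith [(hα x hxI u huI).2]
      · linarith [hu.1]
    have := le_of_tendsto hs hev
    linarith
  -- nonnegativity of λ₋ on (tl, th]
  have lamm_nonneg : ∀ x ∈ Set.Ioc tl th, 0 ≤ lamm x := by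
    intro x hx
    have hxI : x ∈ Set.Icc tl th := ⟨hx.1.le, hx.2⟩
    have hs := hlamm x hxI
    rw [hasDerivWithinAt_iff_tendsto_slope, Set.Iic_diff_right] at hs
    have hev : ∀ᶠ u in nhdsWithin x (Set.Iio x), 0 ≤ slope (fun t => α x t) x u := by
      filter_upwards [Ico_mem_nhdsLT_of_mem ⟨hx.1, le_refl x⟩] with u hu
      have huI : u ∈ Set.Icc tl th := ⟨hu.1, le_trans hu.2.le hxI.2⟩
      rw [slope_def_field, hdiag x hxI]
      apply div_nonneg_iff.2
      refine Or.inr ⟨?_, ?_⟩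
      · linarith [(hα x hxI u huI).2]
      · linarith [hu.2]
    exact ge_of_tendsto hs hev
  -- base inequality (right)
  have key_right : ∀ a ∈ Set.Icc tl th, ∀ b ∈ Set.Icc tl th, a ≤ b →
      1 - (∫ s in a..b, lamp s) ≤ α a b := by
    intro a ha b hb hab
    obtain ⟨g, hgint, hrep⟩ := hAC a ha
    set G : ℝ → ℝ := (Set.Icc tl th).indicator g with hGdef
    have hGint : MeasureTheory.Integrable G :=
      (integrable_indicator_iff measurableSet_Icc).2 hgint
    have hdiff : ∀ u ∈ Set.Icc tl th, ∀ x ∈ Set.Icc tl th,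
        α a u - α a x = ∫ t in x..u, G t := by
      intro u hu x hx
      have h1 : IntervalIntegrable g volume tl u := by
        have hs : Set.uIcc tl u ⊆ Set.Icc tl th := by
          rw [Set.uIcc_of_le hu.1]; exact Set.Icc_subset_Icc le_rfl hu.2
        exact (hgint.mono_set hs).intervalIntegrable
      have h2 : IntervalIntegrable g volume tl x := by
        have hs : Set.uIcc tl x ⊆ Set.Icc tl th := by
          rw [Set.uIcc_of_le hx.1]; exact Set.Icc_subset_Icc le_rfl hx.2
        exact (hgint.mono_set hs).intervalIntegrable
      have h3 : α a u - α a x = ∫ t in x..u, g t := by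
        rw [hrep u hu, hrep x hx]
        rw [← intervalIntegral.integral_interval_sub_left h1 h2]
        ring
      rw [h3]
      apply intervalIntegral.integral_congr
      intro t ht
      have htI : t ∈ Set.Icc tl th := by
        constructor
        · exact le_trans (le_min hx.1 hu.1) ht.1
        · exact le_trans ht.2 (max_le hx.2 hu.2)
      exact (Set.indicator_of_mem htI g).symm
    have habG : α a b = 1 + ∫ t in a..b, G t := by
      have := hdiff b hb a ha
      rw [hdiag a ha] at this
      linarith
    -- a.e. pointwise bound  -(λ₊ x) ≤ G x  on (a, b)
    have hae : ∀ᵐ x : ℝ, x ∈ Set.Ioo a b → -(lamp x) ≤ G x := by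
      filter_upwards [stmt9.lebesgue_aux G hGint] with x hx hxab
      have hx1 : x ∈ Set.Ioo tl th := ⟨lt_of_le_of_lt ha.1 hxab.1, lt_of_lt_of_le hxab.2 hb.2⟩
      have hxI : x ∈ Set.Icc tl th := ⟨hx1.1.le, hx1.2.le⟩
      have hmemIoc : Set.Ioc x th ∈ nhdsWithin x (Set.Ioi x) :=
        Ioc_mem_nhdsGT_of_mem ⟨le_refl x, hx1.2⟩
      have hslope : Filter.Tendsto (fun u => (α a u - α a x) / (u - x))
          (nhdsWithin x (Set.Ioi x)) (nhds (G x)) := by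
        apply hx.1.congr'
        filter_upwards [hmemIoc] with u hu
        rw [hdiff u ⟨le_trans hxI.1 hu.1.le, hu.2⟩ x hxI, div_eq_inv_mul]
      have hs2 := hlamp x hxI
      rw [hasDerivWithinAt_iff_tendsto_slope, Set.Ici_sdiff_left] at hs2
      have hs3 : Filter.Tendsto (fun u => α a x * slope (fun t => α x t) x u)
          (nhdsWithin x (Set.Ioi x)) (nhds (α a x * (-(lamp x)))) := hs2.const_mul _
      have hcmp : α a x * (-(lamp x)) ≤ G x := by
        apply le_of_tendsto_of_tendsto hs3 hslope
        filter_upwards [hmemIoc] with u hu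
        have huI : u ∈ Set.Icc tl th := ⟨le_trans hxI.1 hu.1.le, hu.2⟩
        have htr := htrans u huI x hxI a ha
        have hux : (0:ℝ) < u - x := by linarith [hu.1]
        rw [slope_def_field, hdiag x hxI]
        calc α a x * ((α x u - 1) / (u - x)) = (α a x * (α x u - 1)) / (u - x) := by ring
          _ ≤ (α a u - α a x) / (u - x) := by
              apply div_le_div_of_nonneg_right _ hux.le
              nlinarith
      have h0 := lamp_nonneg x ⟨hxI.1, hx1.2⟩
      have h1 := (hα a ha x hxI).1
      have h2 := (hα a ha x hxI).2
      nlinarith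
    have hlampab : IntervalIntegrable (fun t => -(lamp t)) volume a b := by
      have hs : Set.uIcc a b ⊆ Set.Icc tl th := by
        rw [Set.uIcc_of_le hab]; exact Set.Icc_subset_Icc ha.1 hb.2
      exact ((hlampint.mono_set hs).intervalIntegrable).neg
    have hmono : (∫ t in a..b, -(lamp t)) ≤ ∫ t in a..b, G t := by
      apply intervalIntegral.integral_mono_ae_restrict hab hlampab hGint.intervalIntegrable
      rw [Measure.restrict_congr_set (MeasureTheory.Ioo_ae_eq_Icc).symm]
      exact (MeasureTheory.ae_restrict_iff' measurableSet_Ioo).2 hae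
    rw [intervalIntegral.integral_neg] at hmono
    linarith [habG, hmono]
  -- base inequality (left)
  have key_left : ∀ a ∈ Set.Icc tl th, ∀ b ∈ Set.Icc tl th, a ≤ b →
      1 - (∫ s in a..b, lamm s) ≤ α b a := by
    intro a ha b hb hab
    obtain ⟨g, hgint, hrep⟩ := hAC b hb
    set G : ℝ → ℝ := (Set.Icc tl th).indicator g with hGdef
    have hGint : MeasureTheory.Integrable G :=
      (integrable_indicator_iff measurableSet_Icc).2 hgint
    have hdiff : ∀ u ∈ Set.Icc tl th, ∀ x ∈ Set.Icc tl th,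
        α b u - α b x = ∫ t in x..u, G t := by
      intro u hu x hx
      have h1 : IntervalIntegrable g volume tl u := by
        have hs : Set.uIcc tl u ⊆ Set.Icc tl th := by
          rw [Set.uIcc_of_le hu.1]; exact Set.Icc_subset_Icc le_rfl hu.2
        exact (hgint.mono_set hs).intervalIntegrable
      have h2 : IntervalIntegrable g volume tl x := by
        have hs : Set.uIcc tl x ⊆ Set.Icc tl th := by
          rw [Set.uIcc_of_le hx.1]; exact Set.Icc_subset_Icc le_rfl hx.2
        exact (hgint.mono_set hs).intervalIntegrable
      have h3 : α b u - α b x = ∫ t in x..u, g t := by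
        rw [hrep u hu, hrep x hx]
        rw [← intervalIntegral.integral_interval_sub_left h1 h2]
        ring
      rw [h3]
      apply intervalIntegral.integral_congr
      intro t ht
      have htI : t ∈ Set.Icc tl th := by
        constructor
        · exact le_trans (le_min hx.1 hu.1) ht.1
        · exact le_trans ht.2 (max_le hx.2 hu.2)
      exact (Set.indicator_of_mem htI g).symm
    have habG : α b a = 1 - ∫ t in a..b, G t := by
      have := hdiff a ha b hb
      rw [hdiag b hb, intervalIntegral.integral_symm] at this
      linarith
    -- a.e. pointwise bound  G x ≤ λ₋ x  on (a, b)
    have hae : ∀ᵐ x : ℝ, x ∈ Set.Ioo a b → G x ≤ lamm x := by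
      filter_upwards [stmt9.lebesgue_aux G hGint] with x hx hxab
      have hx1 : x ∈ Set.Ioo tl th := ⟨lt_of_le_of_lt ha.1 hxab.1, lt_of_lt_of_le hxab.2 hb.2⟩
      have hxI : x ∈ Set.Icc tl th := ⟨hx1.1.le, hx1.2.le⟩
      have hmemIco : Set.Ico tl x ∈ nhdsWithin x (Set.Iio x) :=
        Ico_mem_nhdsLT_of_mem ⟨hx1.1, le_refl x⟩
      have hslope : Filter.Tendsto (fun u => (α b u - α b x) / (u - x))
          (nhdsWithin x (Set.Iio x)) (nhds (G x)) := by
        apply hx.2.congr'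
        filter_upwards [hmemIco] with u hu
        rw [hdiff u ⟨hu.1, le_trans hu.2.le hxI.2⟩ x hxI, div_eq_inv_mul]
      have hs2 := hlamm x hxI
      rw [hasDerivWithinAt_iff_tendsto_slope, Set.Iic_diff_right] at hs2
      have hs3 : Filter.Tendsto (fun u => α b x * slope (fun t => α x t) x u)
          (nhdsWithin x (Set.Iio x)) (nhds (α b x * lamm x)) := hs2.const_mul _
      have hcmp : G x ≤ α b x * lamm x := by
        apply le_of_tendsto_of_tendsto hslope hs3
        filter_upwards [hmemIco] with u hu
        have huI : u ∈ Set.Icc tl th := ⟨hu.1, le_trans hu.2.le hxI.2⟩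
        have htr := htrans u huI x hxI b hb
        have hux : (u:ℝ) - x < 0 := by linarith [hu.2]
        rw [slope_def_field, hdiag x hxI]
        calc (α b u - α b x) / (u - x) = (α b u - α b x) * (u - x)⁻¹ := by ring
          _ ≤ (α b x * (α x u - 1)) * (u - x)⁻¹ := by
              apply mul_le_mul_of_nonpos_right _ (inv_nonpos.2 hux.le)
              nlinarith
          _ = α b x * ((α x u - 1) / (u - x)) := by ring
      have h0 := lamm_nonneg x ⟨hx1.1, hxI.2⟩
      have h1 := (hα b hb x hxI).1
      have h2 := (hα b hb x hxI).2
      nlinarith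
    have hlammab : IntervalIntegrable lamm volume a b := by
      have hs : Set.uIcc a b ⊆ Set.Icc tl th := by
        rw [Set.uIcc_of_le hab]; exact Set.Icc_subset_Icc ha.1 hb.2
      exact (hlammint.mono_set hs).intervalIntegrable
    have hmono : (∫ t in a..b, G t) ≤ ∫ t in a..b, lamm t := by
      apply intervalIntegral.integral_mono_ae_restrict hab hGint.intervalIntegrable hlammab
      rw [Measure.restrict_congr_set (MeasureTheory.Ioo_ae_eq_Icc).symm]
      exact (MeasureTheory.ae_restrict_iff' measurableSet_Ioo).2 hae
    linarith [habG, hmono]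
  -- nonnegativity of the integrals
  have int_nonneg_p : ∀ a ∈ Set.Icc tl th, ∀ b ∈ Set.Icc tl th, a ≤ b →
      0 ≤ ∫ s in a..b, lamp s := by
    intro a ha b hb hab
    apply intervalIntegral.integral_nonneg_of_ae_restrict hab
    rw [Measure.restrict_congr_set (MeasureTheory.Ioo_ae_eq_Icc).symm]
    apply (MeasureTheory.ae_restrict_iff' measurableSet_Ioo).2
    apply Filter.Eventually.of_forall
    intro x hx
    exact lamp_nonneg x ⟨le_trans ha.1 hx.1.le, lt_of_lt_of_le hx.2 hb.2⟩
  have int_nonneg_m : ∀ a ∈ Set.Icc tl th, ∀ b ∈ Set.Icc tl th, a ≤ b →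
      0 ≤ ∫ s in a..b, lamm s := by
    intro a ha b hb hab
    apply intervalIntegral.integral_nonneg_of_ae_restrict hab
    rw [Measure.restrict_congr_set (MeasureTheory.Ioo_ae_eq_Icc).symm]
    apply (MeasureTheory.ae_restrict_iff' measurableSet_Ioo).2
    apply Filter.Eventually.of_forall
    intro x hx
    exact lamm_nonneg x ⟨lt_of_le_of_lt ha.1 hx.1, le_trans hx.2.le hb.2⟩
  -- chaining (right)
  have chain_right : ∀ n : ℕ, ∀ a ∈ Set.Icc tl th, ∀ b ∈ Set.Icc tl th, a ≤ b →
      (∫ s in a..b, lamp s) / ((n:ℝ)+1) ≤ 1 →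
      (1 - (∫ s in a..b, lamp s) / ((n:ℝ)+1))^(n+1) ≤ α a b := by
    intro n
    induction n with
    | zero =>
      intro a ha b hb hab _
      simpa using key_right a ha b hb hab
    | succ n ih =>
      intro a ha b hb hab hc
      push_cast
      push_cast at hc
      set I := ∫ s in a..b, lamp s with hI
      have hI0 : 0 ≤ I := int_nonneg_p a ha b hb hab
      set c := I / ((n:ℝ)+2) with hc'
      have hcd : I / ((n:ℝ)+1+1) = c := by rw [hc']; ring_nf
      rw [hcd] at hc ⊢
      have hc0 : 0 ≤ c := by rw [hc']; positivity
      have huIcc : Set.uIcc a b ⊆ Set.Icc tl th := by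
        rw [Set.uIcc_of_le hab]; exact Set.Icc_subset_Icc ha.1 hb.2
      have hLcont : ContinuousOn (fun x => ∫ s in a..x, lamp s) (Set.Icc a b) := by
        have := intervalIntegral.continuousOn_primitive_interval
          (μ := volume) (f := lamp) (hlampint.mono_set huIcc)
        rwa [Set.uIcc_of_le hab] at this
      have hmem : c ∈ Set.Icc ((fun x => ∫ s in a..x, lamp s) a)
          ((fun x => ∫ s in a..x, lamp s) b) := by
        simp only [intervalIntegral.integral_same]
        constructor
        · exact hc0
        · rw [hc']; exact div_le_self hI0 (by linarith [(Nat.cast_nonneg n : (0:ℝ) ≤ n)])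
      obtain ⟨m, hm, hLm⟩ := intermediate_value_Icc hab hLcont hmem
      simp only at hLm
      have hmI : m ∈ Set.Icc tl th := ⟨le_trans ha.1 hm.1, le_trans hm.2 hb.2⟩
      have hi1 : IntervalIntegrable lamp volume a m := by
        have hs : Set.uIcc a m ⊆ Set.Icc tl th := by
          rw [Set.uIcc_of_le hm.1]; exact Set.Icc_subset_Icc ha.1 hmI.2
        exact (hlampint.mono_set hs).intervalIntegrable
      have hi2 : IntervalIntegrable lamp volume a b :=
        (hlampint.mono_set huIcc).intervalIntegrable
      have hsplit : (∫ s in m..b, lamp s) = I - c := by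
        rw [← intervalIntegral.integral_interval_sub_left hi2 hi1, ← hI, hLm]
      have h1 : 1 - c ≤ α a m := by
        have := key_right a ha m hmI hm.1
        rwa [hLm] at this
      have hIc : I - c = ((n:ℝ)+1) * c := by
        rw [hc']; field_simp; ring
      have h2 : (1 - c)^(n+1) ≤ α m b := by
        have hcond : (∫ s in m..b, lamp s) / ((n:ℝ)+1) ≤ 1 := by
          rw [hsplit, hIc, mul_div_cancel_left₀ _ (by positivity : ((n:ℝ)+1) ≠ 0)]
          exact hc
        have := ih m hmI b hb hm.2 hcond
        rwa [hsplit, hIc, mul_div_cancel_left₀ _ (by positivity : ((n:ℝ)+1) ≠ 0)] at this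
      have hc1 : c ≤ 1 := hc
      have h0c : 0 ≤ 1 - c := by linarith
      have hprod : (1 - c)^(n+1+1) ≤ α a m * α m b := by
        rw [pow_succ]
        have := mul_le_mul h2 h1 h0c (hα m hmI b hb).1
        calc (1-c)^(n+1) * (1-c) ≤ α m b * α a m := this
          _ = α a m * α m b := by ring
      exact le_trans hprod (htrans b hb m hmI a ha)
  -- chaining (left)
  have chain_left : ∀ n : ℕ, ∀ a ∈ Set.Icc tl th, ∀ b ∈ Set.Icc tl th, a ≤ b →
      (∫ s in a..b, lamm s) / ((n:ℝ)+1) ≤ 1 →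
      (1 - (∫ s in a..b, lamm s) / ((n:ℝ)+1))^(n+1) ≤ α b a := by
    intro n
    induction n with
    | zero =>
      intro a ha b hb hab _
      simpa using key_left a ha b hb hab
    | succ n ih =>
      intro a ha b hb hab hc
      push_cast
      push_cast at hc
      set I := ∫ s in a..b, lamm s with hI
      have hI0 : 0 ≤ I := int_nonneg_m a ha b hb hab
      set c := I / ((n:ℝ)+2) with hc'
      have hcd : I / ((n:ℝ)+1+1) = c := by rw [hc']; ring_nf
      rw [hcd] at hc ⊢
      have hc0 : 0 ≤ c := by rw [hc']; positivity
      have huIcc : Set.uIcc a b ⊆ Set.Icc tl th := by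
        rw [Set.uIcc_of_le hab]; exact Set.Icc_subset_Icc ha.1 hb.2
      have hLcont : ContinuousOn (fun x => ∫ s in a..x, lamm s) (Set.Icc a b) := by
        have := intervalIntegral.continuousOn_primitive_interval
          (μ := volume) (f := lamm) (hlammint.mono_set huIcc)
        rwa [Set.uIcc_of_le hab] at this
      have hmem : (I - c) ∈ Set.Icc ((fun x => ∫ s in a..x, lamm s) a)
          ((fun x => ∫ s in a..x, lamm s) b) := by
        simp only [intervalIntegral.integral_same]
        constructor
        · have : c ≤ I := by rw [hc']; exact div_le_self hI0 (by linarith [(Nat.cast_nonneg n : (0:ℝ) ≤ n)])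
          linarith
        · linarith
      obtain ⟨m, hm, hLm⟩ := intermediate_value_Icc hab hLcont hmem
      simp only at hLm
      have hmI : m ∈ Set.Icc tl th := ⟨le_trans ha.1 hm.1, le_trans hm.2 hb.2⟩
      have hi1 : IntervalIntegrable lamm volume a m := by
        have hs : Set.uIcc a m ⊆ Set.Icc tl th := by
          rw [Set.uIcc_of_le hm.1]; exact Set.Icc_subset_Icc ha.1 hmI.2
        exact (hlammint.mono_set hs).intervalIntegrable
      have hi2 : IntervalIntegrable lamm volume a b :=
        (hlammint.mono_set huIcc).intervalIntegrable
      have hsplit : (∫ s in m..b, lamm s) = c := by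
        rw [← intervalIntegral.integral_interval_sub_left hi2 hi1, ← hI, hLm]
        ring
      have h1 : 1 - c ≤ α b m := by
        have := key_left m hmI b hb hm.2
        rwa [hsplit] at this
      have hIc : I - c = ((n:ℝ)+1) * c := by
        rw [hc']; field_simp; ring
      have h2 : (1 - c)^(n+1) ≤ α m a := by
        have hcond : (∫ s in a..m, lamm s) / ((n:ℝ)+1) ≤ 1 := by
          rw [hLm, hIc, mul_div_cancel_left₀ _ (by positivity : ((n:ℝ)+1) ≠ 0)]
          exact hc
        have := ih a ha m hmI hm.1 hcond
        rwa [hLm, hIc, mul_div_cancel_left₀ _ (by positivity : ((n:ℝ)+1) ≠ 0)] at this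
      have hc1 : c ≤ 1 := hc
      have h0c : 0 ≤ 1 - c := by linarith
      have hprod : (1 - c)^(n+1+1) ≤ α b m * α m a := by
        rw [pow_succ]
        have := mul_le_mul h2 h1 h0c (hα m hmI a ha).1
        calc (1-c)^(n+1) * (1-c) ≤ α m a * α b m := this
          _ = α b m * α m a := by ring
      exact le_trans hprod (htrans a ha m hmI b hb)
  -- conclusion
  intro θ' hθ' θ hθ
  rw [hΛ θ' θ]
  by_cases hle : θ' ≤ θ
  · rw [if_pos hle]
    set I := ∫ s in θ'..θ, lamp s with hI
    have hI0 : 0 ≤ I := int_nonneg_p θ' hθ' θ hθ hle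
    have htd := Real.tendsto_one_add_div_pow_exp (-I)
    apply le_of_tendsto htd
    filter_upwards [Filter.eventually_ge_atTop (max 1 ⌈I⌉₊)] with n hn
    have hn1 : 1 ≤ n := le_trans (le_max_left _ _) hn
    have hnI : I ≤ (n:ℝ) := le_trans (Nat.le_ceil I)
      (by exact_mod_cast le_trans (le_max_right _ _) hn)
    obtain ⟨k, rfl⟩ : ∃ k, n = k + 1 := ⟨n - 1, by omega⟩
    have hcond : I / ((k:ℝ)+1) ≤ 1 := by
      rw [div_le_one (by positivity)]
      push_cast at hnI
      linarith
    have hch := chain_right k θ' hθ' θ hθ hle hcond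
    calc (1 + -I/((k+1:ℕ):ℝ))^(k+1) = (1 - I/((k:ℝ)+1))^(k+1) := by push_cast; ring_nf
      _ ≤ α θ' θ := hch
  · rw [if_neg hle]
    push_neg at hle
    set I := ∫ s in θ..θ', lamm s with hI
    have hI0 : 0 ≤ I := int_nonneg_m θ hθ θ' hθ' hle.le
    have htd := Real.tendsto_one_add_div_pow_exp (-I)
    apply le_of_tendsto htd
    filter_upwards [Filter.eventually_ge_atTop (max 1 ⌈I⌉₊)] with n hn
    have hn1 : 1 ≤ n := le_trans (le_max_left _ _) hn
    have hnI : I ≤ (n:ℝ) := le_trans (Nat.le_ceil I)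
      (by exact_mod_cast le_trans (le_max_right _ _) hn)
    obtain ⟨k, rfl⟩ : ∃ k, n = k + 1 := ⟨n - 1, by omega⟩
    have hcond : I / ((k:ℝ)+1) ≤ 1 := by
      rw [div_le_one (by positivity)]
      push_cast at hnI
      linarith
    have hch := chain_left k θ hθ θ' hθ' hle.le hcond
    calc (1 + -I/((k+1:ℕ):ℝ))^(k+1) = (1 - I/((k:ℝ)+1))^(k+1) := by push_cast; ring_nf
      _ ≤ α θ' θ := hch
end

section
/- Let μ and ν be probability measures on a compact subset S of ℝ. Then μ first-order stochastically dominates ν if and only if there exists a downward Markov transition d on S (i.e., d(s, (−∞,s] ∩ S) = 1 for all s ∈ S) such that μd = ν. -/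
open MeasureTheory ProbabilityTheory Set Filter Topology

section Aux

/-- Set whose infimum is the quantile function. -/
def q13set (S : Set ℝ) (μ : Measure ℝ) (u : ℝ) : Set ℝ :=
  {x | min u 1 ≤ cdf μ x ∧ sInf S ≤ x}

/-- A clamped quantile function of `μ` (supported on `S`). -/
noncomputable def q13 (S : Set ℝ) (μ : Measure ℝ) (u : ℝ) : ℝ :=
  sInf (q13set S μ u)

variable {S : Set ℝ} {μ ν : Measure ℝ}

lemma q13set_bddBelow (u : ℝ) : BddBelow (q13set S μ u) :=
  ⟨sInf S, fun _ hx => hx.2⟩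

lemma cdf_sSup (hS : IsCompact S) (hne : S.Nonempty) [IsProbabilityMeasure μ]
    (hμS : μ S = 1) : cdf μ (sSup S) = 1 := by
  have h1 : μ (Iic (sSup S)) = 1 := by
    refine le_antisymm prob_le_one ?_
    rw [← hμS]
    exact measure_mono fun y hy => le_csSup hS.bddAbove hy
  rw [cdf_eq_real, measureReal_def, h1, ENNReal.toReal_one]

lemma sSup_mem_q13set (hS : IsCompact S) (hne : S.Nonempty) [IsProbabilityMeasure μ]
    (hμS : μ S = 1) (u : ℝ) : sSup S ∈ q13set S μ u := by
  refine ⟨?_, csInf_le_csSup hne hS.bddBelow hS.bddAbove⟩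
  rw [cdf_sSup hS hne hμS]
  exact min_le_right _ _

lemma q13_mono (hS : IsCompact S) (hne : S.Nonempty) [IsProbabilityMeasure μ]
    (hμS : μ S = 1) : Monotone (q13 S μ) := by
  intro u v huv
  refine csInf_le_csInf (q13set_bddBelow u) ⟨sSup S, sSup_mem_q13set hS hne hμS v⟩ ?_
  exact fun x hx => ⟨le_trans (min_le_min huv le_rfl) hx.1, hx.2⟩

lemma measure_compl_eq_zero (hS : IsCompact S) [IsProbabilityMeasure μ]
    (hμS : μ S = 1) : μ Sᶜ = 0 := by
  rw [measure_compl hS.isClosed.measurableSet (measure_ne_top _ _), measure_univ, hμS,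
    tsub_self]

lemma q13_le_iff (hS : IsCompact S) (hne : S.Nonempty) [IsProbabilityMeasure μ]
    (hμS : μ S = 1) {u x : ℝ} (hu : u ∈ Ioo (0:ℝ) 1) :
    q13 S μ u ≤ x ↔ u ≤ cdf μ x := by
  constructor
  · intro hle
    have hne' : (q13set S μ u).Nonempty := ⟨sSup S, sSup_mem_q13set hS hne hμS u⟩
    have key : ∀ n : ℕ, u ≤ cdf μ (q13 S μ u + 1 / (n + 1)) := by
      intro n
      obtain ⟨y, hy, hylt⟩ := Real.lt_sInf_add_pos hne' (by positivity : (0:ℝ) < 1 / (n + 1))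
      calc u = min u 1 := (min_eq_left hu.2.le).symm
        _ ≤ cdf μ y := hy.1
        _ ≤ cdf μ (q13 S μ u + 1 / (n + 1)) := monotone_cdf μ hylt.le
    have htt : Tendsto (fun n : ℕ => q13 S μ u + 1 / ((n:ℝ) + 1)) atTop
        (𝓝[≥] (q13 S μ u)) := by
      refine tendsto_nhdsWithin_of_tendsto_nhds_of_eventually_within _ ?_ ?_
      · have h0 := tendsto_one_div_add_atTop_nhds_zero_nat (𝕜 := ℝ)
        simpa using tendsto_const_nhds.add h0
      · filter_upwards with n
        have : (0:ℝ) < 1 / ((n:ℝ) + 1) := by positivity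
        simp only [mem_Ici]
        linarith
    have hQ : u ≤ cdf μ (q13 S μ u) :=
      ge_of_tendsto' (((cdf μ).right_continuous _).tendsto.comp htt) key
    exact hQ.trans (monotone_cdf μ hle)
  · intro hcdf
    refine csInf_le (q13set_bddBelow u) ⟨by rwa [min_eq_left hu.2.le], ?_⟩
    by_contra hx
    push_neg at hx
    have hsub : Iic x ⊆ Sᶜ := by
      intro y hy hyS
      exact absurd (csInf_le hS.bddBelow hyS) (by simp only [mem_Iic] at hy; push_neg; linarith)
    have h0 : μ (Iic x) = 0 :=
      le_antisymm (le_trans (measure_mono hsub) (measure_compl_eq_zero hS hμS).le) (zero_le)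
    have : cdf μ x = 0 := by rw [cdf_eq_real, measureReal_def, h0, ENNReal.toReal_zero]
    rw [this] at hcdf
    linarith [hu.1]

lemma q13_map (hS : IsCompact S) (hne : S.Nonempty) [IsProbabilityMeasure μ]
    (hμS : μ S = 1) :
    Measure.map (q13 S μ) (volume.restrict (Ioo (0:ℝ) 1)) = μ := by
  have hQm : Measurable (q13 S μ) := (q13_mono hS hne hμS).measurable
  haveI : IsProbabilityMeasure (volume.restrict (Ioo (0:ℝ) 1)) :=
    ⟨by simp [Real.volume_Ioo]⟩
  haveI : IsProbabilityMeasure (Measure.map (q13 S μ) (volume.restrict (Ioo (0:ℝ) 1))) :=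
    Measure.isProbabilityMeasure_map hQm.aemeasurable
  refine Measure.ext_of_Iic _ _ fun x => ?_
  rw [Measure.map_apply hQm measurableSet_Iic,
    Measure.restrict_apply (hQm measurableSet_Iic)]
  have hset : q13 S μ ⁻¹' Iic x ∩ Ioo 0 1 = Iic (cdf μ x) ∩ Ioo 0 1 := by
    ext u
    simp only [mem_inter_iff, mem_preimage, mem_Iic, and_congr_left_iff]
    intro hu
    exact q13_le_iff hS hne hμS hu
  rw [hset, ← ofReal_cdf]
  have hc0 : 0 ≤ cdf μ x := cdf_nonneg μ x
  have hc1 : cdf μ x ≤ 1 := cdf_le_one μ x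
  rcases lt_or_eq_of_le hc1 with h1 | h1
  · have : Iic (cdf μ x) ∩ Ioo 0 1 = Ioc 0 (cdf μ x) := by
      ext u
      simp only [mem_inter_iff, mem_Iic, mem_Ioo, mem_Ioc]
      constructor
      · rintro ⟨h, h0, _⟩; exact ⟨h0, h⟩
      · rintro ⟨h0, h⟩; exact ⟨h, h0, lt_of_le_of_lt h h1⟩
    rw [this, Real.volume_Ioc, sub_zero]
  · have : Iic (cdf μ x) ∩ Ioo 0 1 = Ioo 0 1 := by
      ext u
      simp only [mem_inter_iff, mem_Iic, mem_Ioo, ← h1]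
      exact ⟨fun h => h.2, fun h => ⟨h.2.le, h⟩⟩
    rw [this, Real.volume_Ioo, sub_zero, h1]

lemma q13_le_q13 (hS : IsCompact S) (hne : S.Nonempty)
    [IsProbabilityMeasure μ] [IsProbabilityMeasure ν]
    (hμS : μ S = 1) (h : ∀ x : ℝ, μ (Iic x) ≤ ν (Iic x)) (u : ℝ) :
    q13 S ν u ≤ q13 S μ u := by
  refine csInf_le_csInf (q13set_bddBelow u) ⟨sSup S, sSup_mem_q13set hS hne hμS u⟩ ?_
  intro x hx
  refine ⟨le_trans hx.1 ?_, hx.2⟩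
  rw [cdf_eq_real, cdf_eq_real, measureReal_def, measureReal_def]
  exact ENNReal.toReal_mono (measure_ne_top ν _) (h x)

end Aux

/-- μ first-order stochastically dominates ν iff ν is obtained from μ by a
downward Markov transition on the compact set S. (μ ≥_SD ν means F_μ ≤ F_ν, i.e.
μ(Iic x) ≤ ν(Iic x) for all x.) -/
theorem stmt13 (S : Set ℝ) (hS : IsCompact S) (μ ν : Measure ℝ)
    [IsProbabilityMeasure μ] [IsProbabilityMeasure ν]
    (hμS : μ S = 1) (hνS : ν S = 1) :
    (∀ x : ℝ, μ (Set.Iic x) ≤ ν (Set.Iic x)) ↔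
      ∃ d : ℝ → Measure ℝ,
        (∀ B : Set ℝ, MeasurableSet B → Measurable fun s => d s B) ∧
        (∀ s ∈ S, IsProbabilityMeasure (d s)) ∧
        (∀ s ∈ S, d s (Set.Iic s ∩ S) = 1) ∧
        (∀ B : Set ℝ, MeasurableSet B → (∫⁻ s, d s B ∂μ) = ν B) := by
  classical
  have hSm : MeasurableSet S := hS.isClosed.measurableSet
  have hne : S.Nonempty := by
    rcases S.eq_empty_or_nonempty with h | h
    · rw [h] at hμS; simp at hμS
    · exact h
  constructor
  · intro h
    -- forward direction: construct the downward transition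
    set P := volume.restrict (Ioo (0:ℝ) 1) with hP
    haveI : IsProbabilityMeasure P := ⟨by simp [hP, Real.volume_Ioo]⟩
    have hQμ : Measurable (q13 S μ) := (q13_mono hS hne hμS).measurable
    have hQν : Measurable (q13 S ν) := (q13_mono hS hne hνS).measurable
    set T : ℝ → ℝ × ℝ := fun u => (q13 S μ u, q13 S ν u) with hT
    have hTm : Measurable T := hQμ.prodMk hQν
    set ρ : Measure (ℝ × ℝ) := Measure.map T P with hρ
    haveI : IsProbabilityMeasure ρ := Measure.isProbabilityMeasure_map hTm.aemeasurable
    have hfst : ρ.fst = μ := by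
      rw [hρ, Measure.fst, Measure.map_map measurable_fst hTm]
      exact q13_map hS hne hμS
    have hsnd : ρ.snd = ν := by
      rw [hρ, Measure.snd, Measure.map_map measurable_snd hTm]
      exact q13_map hS hne hνS
    set κ := ρ.condKernel with hκ
    have hdis : ρ.fst ⊗ₘ κ = ρ := ρ.disintegrate ρ.condKernel
    set C : Set (ℝ × ℝ) := {p | p.2 ≤ p.1 ∧ p.2 ∈ S} with hC
    have hCm : MeasurableSet C :=
      (measurableSet_le measurable_snd measurable_fst).inter (measurable_snd hSm)
    have hρC : ρ Cᶜ = 0 := by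
      have hsub : Cᶜ ⊆ {p : ℝ × ℝ | p.1 < p.2} ∪ Prod.snd ⁻¹' Sᶜ := by
        intro p hp
        simp only [hC, mem_compl_iff, mem_setOf_eq, not_and_or, not_le] at hp
        rcases hp with h1 | h2
        · exact Or.inl h1
        · exact Or.inr h2
      refine le_antisymm (le_trans (measure_mono hsub) (le_trans (measure_union_le _ _) ?_))
        (zero_le)
      have h1 : ρ {p : ℝ × ℝ | p.1 < p.2} = 0 := by
        rw [hρ, Measure.map_apply hTm (measurableSet_lt measurable_fst measurable_snd)]
        have : T ⁻¹' {p : ℝ × ℝ | p.1 < p.2} = ∅ := by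
          ext u
          simp only [mem_preimage, hT, mem_setOf_eq, mem_empty_iff_false, iff_false, not_lt]
          exact q13_le_q13 hS hne hμS h u
        rw [this, measure_empty]
      have h2 : ρ (Prod.snd ⁻¹' Sᶜ) = 0 := by
        rw [← Measure.snd_apply hSm.compl, hsnd]
        exact measure_compl_eq_zero hS hνS
      rw [h1, h2, add_zero]
    -- a.e. the conditional kernel is supported on Iic s ∩ S
    have hpre : ∀ s : ℝ, Prod.mk s ⁻¹' C = Set.Iic s ∩ S := by
      intro s; ext y; simp [hC, Set.mem_Iic]
    have h0 : ∫⁻ s, κ s (Prod.mk s ⁻¹' Cᶜ) ∂μ = 0 := by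
      rw [← hfst, ← Measure.compProd_apply hCm.compl, hdis, hρC]
    have hae : ∀ᵐ s ∂μ, κ s (Set.Iic s ∩ S) = 1 := by
      rw [lintegral_eq_zero_iff (Kernel.measurable_kernel_prodMk_left hCm.compl)] at h0
      filter_upwards [h0] with s hs
      simp only [Pi.zero_apply, Set.preimage_compl, hpre s] at hs
      rwa [← prob_compl_eq_zero_iff (measurableSet_Iic.inter hSm)]
    set m := sInf S with hm
    have hmS : m ∈ S := hS.sInf_mem hne
    refine ⟨fun s => if κ s (Set.Iic s ∩ S) = 1 then κ s else Measure.dirac m,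
      ?_, ?_, ?_, ?_⟩
    · intro B hB
      have hGm : MeasurableSet {s : ℝ | κ s (Set.Iic s ∩ S) = 1} := by
        have hk : Measurable fun s => κ s (Prod.mk s ⁻¹' C) :=
          Kernel.measurable_kernel_prodMk_left hCm
        have : {s : ℝ | κ s (Set.Iic s ∩ S) = 1}
            = (fun s => κ s (Prod.mk s ⁻¹' C)) ⁻¹' {1} := by
          ext s; simp [hpre s]
        rw [this]
        exact hk (measurableSet_singleton 1)
      have heq : (fun s => (if κ s (Set.Iic s ∩ S) = 1 then κ s else Measure.dirac m) B)
          = fun s => if κ s (Set.Iic s ∩ S) = 1 then κ s B else Measure.dirac m B := by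
        funext s
        exact apply_ite (fun t : Measure ℝ => t B) _ _ _
      rw [heq]
      exact Measurable.ite hGm (κ.measurable_coe hB) measurable_const
    · intro s _
      dsimp only
      split_ifs with hs
      · infer_instance
      · infer_instance
    · intro s hsS
      dsimp only
      split_ifs with hs
      · exact hs
      · rw [Measure.dirac_apply' _ (measurableSet_Iic.inter hSm)]
        have : m ∈ Set.Iic s ∩ S := ⟨csInf_le hS.bddBelow hsS, hmS⟩
        simp [Set.indicator_of_mem this]
    · intro B hB
      have he : (fun s => (if κ s (Set.Iic s ∩ S) = 1 then κ s else Measure.dirac m) B)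
          =ᵐ[μ] fun s => κ s B := by
        filter_upwards [hae] with s hs
        rw [if_pos hs]
      rw [lintegral_congr_ae he]
      have h1 : ∫⁻ s, κ s B ∂μ = (ρ.fst ⊗ₘ κ) (Set.univ ×ˢ B) := by
        rw [Measure.compProd_apply (MeasurableSet.univ.prod hB), hfst]
        refine lintegral_congr fun s => ?_
        congr 1
        ext y; simp
      rw [h1, hdis, ← hsnd, Measure.snd_apply hB]
      congr 1
      ext p; simp
  · rintro ⟨d, hmeas, hprob, hdown, hpush⟩ x
    have key : ∀ s ∈ Set.Iic x ∩ S, d s (Set.Iic x) = 1 := by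
      rintro s ⟨hsx, hsS⟩
      haveI := hprob s hsS
      refine le_antisymm prob_le_one ?_
      rw [← hdown s hsS]
      exact measure_mono fun y hy => Set.mem_Iic.mpr (le_trans hy.1 hsx)
    calc μ (Set.Iic x) = μ (Set.Iic x ∩ S) := by
          refine le_antisymm ?_ (measure_mono Set.inter_subset_left)
          calc μ (Set.Iic x) ≤ μ ((Set.Iic x ∩ S) ∪ Sᶜ) := by
                refine measure_mono fun y hy => ?_
                by_cases hyS : y ∈ S
                · exact Or.inl ⟨hy, hyS⟩
                · exact Or.inr hyS
            _ ≤ μ (Set.Iic x ∩ S) + μ Sᶜ := measure_union_le _ _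
            _ = μ (Set.Iic x ∩ S) := by rw [measure_compl_eq_zero hS hμS, add_zero]
      _ = ∫⁻ s in Set.Iic x ∩ S, 1 ∂μ := by rw [setLIntegral_one]
      _ = ∫⁻ s in Set.Iic x ∩ S, d s (Set.Iic x) ∂μ := by
          refine setLIntegral_congr_fun (measurableSet_Iic.inter hSm) ?_
          intro s hs
          exact (key s hs).symm
      _ ≤ ∫⁻ s, d s (Set.Iic x) ∂μ := setLIntegral_le_lintegral _ _
      _ = ν (Set.Iic x) := hpush _ measurableSet_Iic
end

section
/- A Markov transition m on a compact subset S ⊂ ℝ is monotone (s > t implies m_s ≥_SD m_t) if and only if for all probability measures μ, ν on S with μ ≥_SD ν, it holds that μm ≥_SD νm. -/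
open MeasureTheory

/-- A lower set in ℝ has smaller measure under a dominating measure. -/
lemma lower_set_le (μ ν : Measure ℝ) (hμ : IsProbabilityMeasure μ)
    (hν : IsProbabilityMeasure ν)
    (hd : ∀ x : ℝ, μ (Set.Iic x) ≤ ν (Set.Iic x))
    (L : Set ℝ) (hL : IsLowerSet L) : μ L ≤ ν L := by
  rcases L.eq_empty_or_nonempty with rfl | hne
  · simp
  by_cases huniv : L = Set.univ
  · subst huniv; simp
  -- L is bounded above
  obtain ⟨c, hc⟩ : ∃ c, c ∉ L := by
    by_contra h; push_neg at h; exact huniv (Set.eq_univ_of_forall h)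
  have hbdd : BddAbove L := by
    refine ⟨c, fun x hx => ?_⟩
    by_contra hxc; push_neg at hxc
    exact hc (hL hxc.le hx)
  set b := sSup L with hb
  by_cases hbL : b ∈ L
  · have : L = Set.Iic b := by
      ext x
      constructor
      · exact fun hx => le_csSup hbdd hx
      · exact fun hx => hL hx hbL
    rw [this]; exact hd b
  · have hLIio : L = Set.Iio b := by
      ext x
      constructor
      · intro hx
        rcases lt_or_eq_of_le (le_csSup hbdd hx) with h | h
        · exact h
        · exfalso; apply hbL; rw [hb, ← h]; exact hx
      · intro hx
        obtain ⟨y, hy, hxy⟩ := exists_lt_of_lt_csSup hne hx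
        exact hL hxy.le hy
    have hUnion : Set.Iio b = ⋃ n : ℕ, Set.Iic (b - 1/(n+1)) := by
      ext x
      simp only [Set.mem_Iio, Set.mem_iUnion, Set.mem_Iic]
      constructor
      · intro hx
        obtain ⟨n, hn⟩ := exists_nat_one_div_lt (sub_pos.mpr hx)
        exact ⟨n, by linarith⟩
      · rintro ⟨n, hn⟩
        have : (0:ℝ) < 1/(n+1) := by positivity
        linarith
    have hdir : Directed (· ⊆ ·) (fun n : ℕ => Set.Iic (b - 1/(n+1))) := by
      apply Monotone.directed_le
      intro i j hij
      apply Set.Iic_subset_Iic.mpr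
      have hij' : (i:ℝ) + 1 ≤ (j:ℝ) + 1 := by exact_mod_cast Nat.succ_le_succ hij
      have h1 : (0:ℝ) < (i:ℝ) + 1 := by positivity
      have : 1/((j:ℝ)+1) ≤ 1/((i:ℝ)+1) := by
        apply one_div_le_one_div_of_le h1 hij'
      linarith
    rw [hLIio, hUnion, Directed.measure_iUnion hdir, Directed.measure_iUnion hdir]
    exact iSup_mono fun n => hd _

/-- a Markov transition m on a compact S ⊂ ℝ is monotone (s > t ⟹
m_s ≥_SD m_t) iff it preserves first-order stochastic dominance of measures on S. -/
theorem stmt14 (S : Set ℝ) (hS : IsCompact S) (m : ℝ → Measure ℝ)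
    (hmeas : ∀ B : Set ℝ, MeasurableSet B → Measurable fun s => m s B)
    (hprob : ∀ s ∈ S, IsProbabilityMeasure (m s))
    (hsupp : ∀ s ∈ S, m s S = 1) :
    (∀ s ∈ S, ∀ t ∈ S, t < s → ∀ x : ℝ, m s (Set.Iic x) ≤ m t (Set.Iic x)) ↔
      (∀ μ ν : Measure ℝ, IsProbabilityMeasure μ → IsProbabilityMeasure ν →
        μ S = 1 → ν S = 1 →
        (∀ x : ℝ, μ (Set.Iic x) ≤ ν (Set.Iic x)) →
        ∀ x : ℝ, (∫⁻ s, m s (Set.Iic x) ∂μ) ≤ ∫⁻ s, m s (Set.Iic x) ∂ν) := by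
  classical
  have hSmeas : MeasurableSet S := hS.isClosed.measurableSet
  constructor
  · -- monotone ⟹ preserves stochastic dominance
    intro hmono μ ν hμ hν hμS hνS hdom x
    -- truncate outside S
    set f : ℝ → ENNReal := fun s => if s ∈ S then m s (Set.Iic x) else 0 with hf
    have hμSc : μ Sᶜ = 0 := (prob_compl_eq_zero_iff hSmeas).mpr hμS
    have hνSc : ν Sᶜ = 0 := (prob_compl_eq_zero_iff hSmeas).mpr hνS
    have hfle1 : ∀ s, f s ≤ 1 := by
      intro s
      simp only [hf]
      split_ifs with h
      · haveI := hprob s h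
        exact prob_le_one
      · exact zero_le_one
    have hfne : ∀ s, f s ≠ ⊤ := fun s => (lt_of_le_of_lt (hfle1 s) (by norm_num)).ne
    have hfmeas : Measurable f := Measurable.ite hSmeas (hmeas _ measurableSet_Iic)
      measurable_const
    -- rewrite integrals using f
    have hcongr : ∀ (ρ : Measure ℝ), ρ Sᶜ = 0 →
        (∫⁻ s, m s (Set.Iic x) ∂ρ) = ∫⁻ s, f s ∂ρ := by
      intro ρ hρ
      apply lintegral_congr_ae
      filter_upwards [measure_eq_zero_iff_ae_notMem.mp hρ] with s hs
      simp only [hf, if_pos (not_not.mp hs)]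
    rw [hcongr μ hμSc, hcongr ν hνSc]
    -- real-valued version
    set g : ℝ → ℝ := fun s => (f s).toReal with hg
    have hgnn : ∀ s, 0 ≤ g s := fun s => ENNReal.toReal_nonneg
    have hofReal : ∀ s, ENNReal.ofReal (g s) = f s := fun s =>
      ENNReal.ofReal_toReal (hfne s)
    have hgmeas : Measurable g := hfmeas.ennreal_toReal
    have key : ∀ (ρ : Measure ℝ), (∫⁻ s, f s ∂ρ) =
        ∫⁻ t in Set.Ioi (0:ℝ), ρ {a : ℝ | t < g a} := by
      intro ρ
      rw [← lintegral_eq_lintegral_meas_lt ρ (Filter.Eventually.of_forall hgnn)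
        hgmeas.aemeasurable]
      exact lintegral_congr fun s => (hofReal s).symm
    rw [key μ, key ν]
    apply lintegral_mono_ae
    filter_upwards [self_mem_ae_restrict measurableSet_Ioi] with t ht
    -- superlevel set is contained in S since t > 0
    set A : Set ℝ := {a : ℝ | t < g a} with hA
    have hAS : A ⊆ S := by
      intro a ha
      by_contra haS
      have : f a = 0 := by simp only [hf, if_neg haS]
      simp only [hA, Set.mem_setOf_eq, hg, this, ENNReal.toReal_zero] at ha
      exact absurd (ht.trans ha) (lt_irrefl 0)
    -- the lower closure of A
    set L : Set ℝ := {y : ℝ | ∃ a ∈ A, y ≤ a} with hL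
    have hLlow : IsLowerSet L := by
      rintro y z hzy ⟨a, ha, hya⟩
      exact ⟨a, ha, hzy.trans hya⟩
    have hAL : A ⊆ L := fun a ha => ⟨a, ha, le_refl a⟩
    have hLAS : L ⊆ A ∪ Sᶜ := by
      rintro y ⟨a, ha, hya⟩
      by_cases hyS : y ∈ S
      · left
        rcases lt_or_eq_of_le hya with hlt | rfl
        · have hfa : f a ≤ f y := by
            simp only [hf, if_pos hyS, if_pos (hAS ha)]
            exact hmono a (hAS ha) y hyS hlt x
          have : g a ≤ g y := ENNReal.toReal_le_toReal (hfne a) (hfne y) |>.mpr hfa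
          exact lt_of_lt_of_le ha this
        · exact ha
      · right; exact hyS
    calc μ A ≤ μ L := measure_mono hAL
      _ ≤ ν L := lower_set_le μ ν hμ hν hdom L hLlow
      _ ≤ ν (A ∪ Sᶜ) := measure_mono hLAS
      _ ≤ ν A + ν Sᶜ := measure_union_le _ _
      _ = ν A := by rw [hνSc, add_zero]
  · -- preservation ⟹ monotone (use Dirac measures)
    intro hpres s hs t ht hlt x
    haveI := hprob s hs
    haveI := hprob t ht
    have h := hpres (Measure.dirac s) (Measure.dirac t)
      (Measure.dirac.isProbabilityMeasure) (Measure.dirac.isProbabilityMeasure)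
      (by rw [Measure.dirac_apply' s hSmeas, Set.indicator_of_mem hs]; rfl)
      (by rw [Measure.dirac_apply' t hSmeas, Set.indicator_of_mem ht]; rfl)
      (by
        intro y
        by_cases hsy : s ≤ y
        · have hty : t ∈ Set.Iic y := le_of_lt (lt_of_lt_of_le hlt hsy)
          rw [Measure.dirac_apply' t measurableSet_Iic, Set.indicator_of_mem hty]
          calc Measure.dirac s (Set.Iic y) ≤ Measure.dirac s Set.univ :=
                measure_mono (Set.subset_univ _)
            _ = 1 := measure_univ
        · rw [Measure.dirac_apply' s measurableSet_Iic,
            Set.indicator_of_notMem (by simpa using hsy)]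
          exact zero_le) x
    rwa [lintegral_dirac' s (hmeas _ measurableSet_Iic),
      lintegral_dirac' t (hmeas _ measurableSet_Iic)] at h
end

section
/- Let μ be a probability measure on ℝ with compact support, F_μ its right-continuous cdf. Define the cumulative distribution transition F̃_μ mapping each s ∈ ℝ to the uniform distribution on [F_μ(s−), F_μ(s)]. Then μ F̃_μ equals the uniform distribution on [0,1]. -/
open MeasureTheory Set Filter Topology ProbabilityTheory Function

/-- The uniform probability measure on the interval `[a, b]` (Dirac at `a` when the
interval is degenerate). -/
noncomputable def unif (a b : ℝ) : Measure ℝ :=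
  if a < b then (ENNReal.ofReal (b - a))⁻¹ • (volume.restrict (Set.Icc a b))
  else Measure.dirac a

lemma unif_apply_lt {a b : ℝ} (h : a < b) (B : Set ℝ) :
    unif a b B = (ENNReal.ofReal (b - a))⁻¹ * volume (B ∩ Set.Icc a b) := by
  rw [unif, if_pos h, Measure.smul_apply, smul_eq_mul,
    Measure.restrict_apply' measurableSet_Icc]

lemma unif_apply_eq {a b : ℝ} (h : ¬ a < b) {B : Set ℝ} (hB : MeasurableSet B) :
    unif a b B = B.indicator 1 a := by
  rw [unif, if_neg h, Measure.dirac_apply' _ hB]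

lemma unif_univ {a b : ℝ} (h : a ≤ b) : unif a b Set.univ = 1 := by
  rcases lt_or_eq_of_le h with hlt | heq
  · rw [unif_apply_lt hlt, Set.univ_inter, Real.volume_Icc,
      ENNReal.inv_mul_cancel (by simp [hlt]) ENNReal.ofReal_ne_top]
  · rw [unif, if_neg (by simp [heq])]; simp

lemma measurable_unif {B : Set ℝ} (hB : MeasurableSet B) :
    Measurable (fun p : ℝ × ℝ => unif p.1 p.2 B) := by
  have hs : MeasurableSet {q : (ℝ × ℝ) × ℝ | q.2 ∈ Set.Icc q.1.1 q.1.2 ∩ B} := by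
    have : {q : (ℝ × ℝ) × ℝ | q.2 ∈ Set.Icc q.1.1 q.1.2 ∩ B}
        = ({q : (ℝ × ℝ) × ℝ | q.1.1 ≤ q.2} ∩ {q | q.2 ≤ q.1.2}) ∩ (Prod.snd ⁻¹' B) := by
      ext q; simp [Set.mem_Icc, and_assoc]
    rw [this]
    exact ((measurableSet_le (measurable_fst.fst) measurable_snd).inter
      (measurableSet_le measurable_snd (measurable_fst.snd))).inter
      (measurable_snd hB)
  have h1 : Measurable (fun p : ℝ × ℝ => volume (B ∩ Set.Icc p.1 p.2)) := by
    have h := measurable_measure_prodMk_left (ν := (volume : Measure ℝ)) hs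
    have heq : (fun p : ℝ × ℝ => volume (B ∩ Set.Icc p.1 p.2))
        = fun p : ℝ × ℝ => volume (Prod.mk p ⁻¹' {q : (ℝ × ℝ) × ℝ | q.2 ∈ Set.Icc q.1.1 q.1.2 ∩ B}) := by
      funext p
      congr 1
      ext x
      simp [Set.mem_Icc, and_comm]
    rw [heq]
    exact h
  have heq : (fun p : ℝ × ℝ => unif p.1 p.2 B) = fun p =>
      if p.1 < p.2 then (ENNReal.ofReal (p.2 - p.1))⁻¹ * volume (B ∩ Set.Icc p.1 p.2)
      else B.indicator 1 p.1 := by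
    funext p
    by_cases h : p.1 < p.2
    · rw [if_pos h, unif_apply_lt h]
    · rw [if_neg h, unif_apply_eq h hB]
  rw [heq]
  refine Measurable.ite (measurableSet_lt measurable_fst measurable_snd) ?_ ?_
  · exact ((ENNReal.measurable_ofReal.comp (measurable_snd.sub measurable_fst)).inv).mul h1
  · exact (measurable_const.indicator hB).comp measurable_fst

lemma measurable_kernel {F : ℝ → ℝ} (hF : Monotone F) :
    Measurable (fun s : ℝ => unif (Function.leftLim F s) (F s)) := by
  apply Measure.measurable_of_measurable_coe
  intro B hB
  exact (measurable_unif hB).comp ((hF.leftLim.measurable).prodMk hF.measurable)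

lemma stmt16_Iic (μ : Measure ℝ) [IsProbabilityMeasure μ]
    (S : Set ℝ) (hS : IsCompact S) (hμS : μ S = 1) (t : ℝ) :
    (∫⁻ s, unif (Function.leftLim (⇑(ProbabilityTheory.cdf μ)) s) ((ProbabilityTheory.cdf μ) s)
      (Set.Iic t) ∂μ) = unif 0 1 (Set.Iic t) := by
  set F : ℝ → ℝ := ⇑(cdf μ) with hFdef
  have Fm : Monotone F := (cdf μ).mono
  have Fnn : ∀ x, 0 ≤ F x := fun x => cdf_nonneg μ x
  have Fle1 : ∀ x, F x ≤ 1 := fun x => cdf_le_one μ x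
  have LleF : ∀ x, leftLim F x ≤ F x := fun x => Fm.leftLim_le le_rfl
  have Lnn : ∀ x, 0 ≤ leftLim F x := fun x => le_trans (Fnn (x - 1)) (Fm.le_leftLim (by linarith))
  have hIic : ∀ x, μ (Set.Iic x) = ENNReal.ofReal (F x) := fun x => (ofReal_cdf (μ := μ) x).symm
  have hsing : ∀ x, μ {x} = ENNReal.ofReal (F x - leftLim F x) := by
    intro x
    have h := (cdf μ).measure_singleton x
    rwa [measure_cdf] at h
  have hIoc : ∀ a b, μ (Set.Ioc a b) = ENNReal.ofReal (F b - F a) := by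
    intro a b; have h := (cdf μ).measure_Ioc a b; rwa [measure_cdf] at h
  have hIoo : ∀ a b, μ (Set.Ioo a b) = ENNReal.ofReal (leftLim F b - F a) := by
    intro a b; have h := (cdf μ).measure_Ioo (a := a) (b := b); rwa [measure_cdf] at h
  have hIio : ∀ x, μ (Set.Iio x) = ENNReal.ofReal (leftLim F x) := by
    intro x
    have hd : Set.Iio x = Set.Iic x \ {x} := by ext y; simp [lt_iff_le_and_ne]
    rw [hd, measure_diff (by simp) (measurableSet_singleton x).nullMeasurableSet
      (measure_ne_top μ _), hIic, hsing,
      ← ENNReal.ofReal_sub _ (sub_nonneg.2 (LleF x))]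
    congr 1; ring
  have hrc : ∀ x, Tendsto F (𝓝[>] x) (𝓝 (F x)) := fun x =>
    ((cdf μ).right_continuous x).tendsto.mono_left (nhdsWithin_mono _ Set.Ioi_subset_Ici_self)
  have hSne : S.Nonempty := by
    rcases Set.eq_empty_or_nonempty S with h | h
    · rw [h, measure_empty] at hμS; exact absurd hμS (by simp)
    · exact h
  obtain ⟨M, hM⟩ := hS.bddAbove
  have hFM : F M = 1 := by
    have h1 : μ (Set.Iic M) = 1 := by
      refine le_antisymm prob_le_one ?_
      rw [← hμS]
      exact measure_mono fun x hx => hM hx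
    rw [hFdef, cdf_eq_real, measureReal_def, h1, ENNReal.toReal_one]
  obtain ⟨L, hL⟩ := hS.bddBelow
  have hcompl : μ Sᶜ = 0 := by
    rw [measure_compl hS.measurableSet (measure_ne_top μ S), hμS, measure_univ, tsub_self]
  have hflow : ∀ s, s < L → F s = 0 := by
    intro s hs
    have h0 : μ (Set.Iic s) = 0 :=
      measure_mono_null (by
        intro x hx
        simp only [Set.mem_compl_iff]
        intro hxS
        exact absurd (hL hxS) (not_le.2 (lt_of_le_of_lt hx hs))) hcompl
    rw [hFdef, cdf_eq_real, measureReal_def, h0, ENNReal.toReal_zero]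
  rcases lt_or_ge t 0 with ht | ht
  · -- t < 0
    have hRHS : unif 0 1 (Set.Iic t) = 0 := by
      rw [unif_apply_lt zero_lt_one]
      have he : Set.Iic t ∩ Set.Icc 0 1 = ∅ := by
        ext x
        simp only [Set.mem_inter_iff, Set.mem_Iic, Set.mem_Icc, Set.mem_empty_iff_false,
          iff_false, not_and]
        intro h1 h2
        intro h3
        linarith
      rw [he, measure_empty, mul_zero]
    rw [hRHS]
    have hg : ∀ s, unif (leftLim F s) (F s) (Set.Iic t) = 0 := by
      intro s
      by_cases hab : leftLim F s < F s
      · rw [unif_apply_lt hab]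
        have he : Set.Iic t ∩ Set.Icc (leftLim F s) (F s) = ∅ := by
          ext x
          simp only [Set.mem_inter_iff, Set.mem_Iic, Set.mem_Icc, Set.mem_empty_iff_false,
            iff_false, not_and]
          intro h1 h2
          intro h3
          linarith [Lnn s]
        rw [he, measure_empty, mul_zero]
      · rw [unif_apply_eq hab measurableSet_Iic, Set.indicator_of_notMem]
        simp only [Set.mem_Iic, not_le]
        exact lt_of_lt_of_le ht (Lnn s)
    simp only [hg, lintegral_zero]
  rcases le_or_gt 1 t with ht1 | ht1
  · -- 1 ≤ t
    have hRHS : unif 0 1 (Set.Iic t) = 1 := by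
      have hsub : Set.Icc (0:ℝ) 1 ⊆ Set.Iic t := fun x hx => le_trans hx.2 ht1
      rw [unif_apply_lt zero_lt_one, Set.inter_eq_self_of_subset_right hsub,
        Real.volume_Icc]
      exact ENNReal.inv_mul_cancel (by norm_num) ENNReal.ofReal_ne_top
    rw [hRHS]
    have hg : ∀ s, unif (leftLim F s) (F s) (Set.Iic t) = 1 := by
      intro s
      by_cases hab : leftLim F s < F s
      · have hsub : Set.Icc (leftLim F s) (F s) ⊆ Set.Iic t :=
          fun x hx => le_trans hx.2 (le_trans (Fle1 s) ht1)
        rw [unif_apply_lt hab, Set.inter_eq_self_of_subset_right hsub, Real.volume_Icc]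
        exact ENNReal.inv_mul_cancel (by simp [hab]) ENNReal.ofReal_ne_top
      · rw [unif_apply_eq hab measurableSet_Iic,
          Set.indicator_of_mem (by exact le_trans (LleF s) (le_trans (Fle1 s) ht1))]
        rfl
    simp only [hg]
    rw [lintegral_one, measure_univ]
  -- 0 ≤ t < 1
  have hRHS : unif 0 1 (Set.Iic t) = ENNReal.ofReal t := by
    rw [unif_apply_lt zero_lt_one]
    have he : Set.Iic t ∩ Set.Icc 0 1 = Set.Icc 0 t := by
      ext x
      simp only [Set.mem_inter_iff, Set.mem_Iic, Set.mem_Icc]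
      constructor
      · rintro ⟨h1, h2, h3⟩; exact ⟨h2, h1⟩
      · rintro ⟨h1, h2⟩; exact ⟨h2, h1, le_trans h2 ht1.le⟩
    rw [he, Real.volume_Icc, sub_zero, sub_zero, ENNReal.ofReal_one, inv_one, one_mul]
  rw [hRHS]
  rcases eq_or_lt_of_le ht with ht0 | ht0
  · -- t = 0
    subst ht0
    rw [ENNReal.ofReal_zero]
    have hnull0 : μ {s | F s = 0 ∧ leftLim F s = 0} = 0 := by
      set E : Set ℝ := {s | F s = 0 ∧ leftLim F s = 0} with hE
      rcases E.eq_empty_or_nonempty with hEe | hEne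
      · rw [hEe]; exact measure_empty
      · have hEb : BddAbove E := by
          refine ⟨M, fun s hs => ?_⟩
          by_contra h
          push_neg at h
          have h2 := Fm h.le
          rw [hFM, hs.1] at h2
          linarith
        set r := sSup E with hr
        by_cases hrE : r ∈ E
        · have hsub : E ⊆ Set.Iic r := fun s hs => le_csSup hEb hs
          refine measure_mono_null hsub ?_
          rw [hIic, hrE.1, ENNReal.ofReal_zero]
        · have hsub : E ⊆ Set.Iio r := by
            intro s hs
            refine lt_of_le_of_ne (le_csSup hEb hs) fun h => hrE ?_
            rw [hr, ← h]
            exact hs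
          refine measure_mono_null hsub ?_
          rw [hIio, ENNReal.ofReal_eq_zero]
          refine le_of_tendsto (Fm.tendsto_leftLim r) ?_
          refine eventually_of_mem self_mem_nhdsWithin fun u hu => ?_
          obtain ⟨e, heE, hue⟩ := exists_lt_of_lt_csSup hEne hu
          exact le_trans (Fm hue.le) (le_of_eq heE.1)
    have hae : ∀ᵐ s ∂μ, ¬(F s = 0 ∧ leftLim F s = 0) := by
      filter_upwards [compl_mem_ae_iff.2 hnull0] with s hs
      exact hs
    have hcongr : (∫⁻ s, unif (leftLim F s) (F s) (Set.Iic 0) ∂μ) = ∫⁻ _, 0 ∂μ := by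
      refine lintegral_congr_ae ?_
      filter_upwards [hae] with s hs
      by_cases hab : leftLim F s < F s
      · rw [unif_apply_lt hab]
        have hv : volume (Set.Iic 0 ∩ Set.Icc (leftLim F s) (F s)) = 0 := by
          refine measure_mono_null (fun x hx => Set.mem_singleton_iff.2
            (le_antisymm hx.1 (le_trans (Lnn s) hx.2.1))) Real.volume_singleton
        rw [hv, mul_zero]
      · rw [unif_apply_eq hab measurableSet_Iic, Set.indicator_of_notMem]
        simp only [Set.mem_Iic, not_le]
        have heqq : leftLim F s = F s := le_antisymm (LleF s) (not_lt.1 hab)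
        refine lt_of_le_of_ne (Lnn s) fun h0 => hs ⟨?_, h0.symm⟩
        rw [← heqq, ← h0]
    rw [hcongr, lintegral_zero]
  · -- 0 < t < 1
    set A : Set ℝ := {s | t ≤ F s} with hA
    have hAne : A.Nonempty := ⟨M, by simp only [hA, Set.mem_setOf_eq, hFM]; exact ht1.le⟩
    have hAbdd : BddBelow A := by
      refine ⟨L - 1, fun s hs => ?_⟩
      by_contra h
      push_neg at h
      have h0 := hflow s (by linarith)
      have h2 : t ≤ F s := hs
      rw [h0] at h2
      linarith
    set q := sInf A with hq
    have hq_ub : ∀ u, q < u → t ≤ F u := by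
      intro u hu
      obtain ⟨s, hsA, hsu⟩ := (csInf_lt_iff hAbdd hAne).1 hu
      exact le_trans hsA (Fm hsu.le)
    have hFq : t ≤ F q := by
      refine ge_of_tendsto (hrc q) ?_
      exact eventually_of_mem self_mem_nhdsWithin fun u hu => hq_ub u hu
    have hlt_q : ∀ s, s < q → F s < t := by
      intro s hs
      by_contra h
      push_neg at h
      exact absurd (csInf_le hAbdd h) (not_le.2 hs)
    have ha0t : leftLim F q ≤ t :=
      le_of_tendsto (Fm.tendsto_leftLim q)
        (eventually_of_mem self_mem_nhdsWithin fun u hu => (hlt_q u hu).le)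
    have hnullE : μ {s | q < s ∧ F s = t ∧ leftLim F s = t} = 0 := by
      set E : Set ℝ := {s | q < s ∧ F s = t ∧ leftLim F s = t} with hE
      rcases E.eq_empty_or_nonempty with hEe | hEne
      · rw [hEe]; exact measure_empty
      · obtain ⟨e, he⟩ := hEne
        have hFqt : F q = t := le_antisymm (he.2.1 ▸ Fm he.1.le) hFq
        have hEb : BddAbove E := by
          refine ⟨M, fun s hs => ?_⟩
          by_contra h
          push_neg at h
          have h2 := Fm h.le
          rw [hFM, hs.2.1] at h2
          linarith
        set r := sSup E with hr
        by_cases hrE : r ∈ E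
        · have hsub : E ⊆ Set.Ioc q r := fun s hs => ⟨hs.1, le_csSup hEb hs⟩
          refine measure_mono_null hsub ?_
          rw [hIoc, hrE.2.1, hFqt, sub_self, ENNReal.ofReal_zero]
        · have hsub : E ⊆ Set.Ioo q r := fun s hs =>
            ⟨hs.1, lt_of_le_of_ne (le_csSup hEb hs) (by
              intro h
              refine absurd ?_ hrE
              rw [← h]
              exact hs)⟩
          refine measure_mono_null hsub ?_
          rw [hIoo, hFqt, ENNReal.ofReal_eq_zero, sub_nonpos]
          refine le_of_tendsto (Fm.tendsto_leftLim r) ?_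
          refine eventually_of_mem self_mem_nhdsWithin fun u hu => ?_
          obtain ⟨e', he', hue'⟩ := exists_lt_of_lt_csSup ⟨e, he⟩ hu
          exact le_trans (Fm hue'.le) (le_of_eq he'.2.1)
    have hg1 : ∀ s ∈ Set.Iio q, unif (leftLim F s) (F s) (Set.Iic t) = 1 := by
      intro s hs
      have hbt : F s < t := hlt_q s hs
      by_cases hab : leftLim F s < F s
      · have hsub : Set.Icc (leftLim F s) (F s) ⊆ Set.Iic t := fun x hx => le_trans hx.2 hbt.le
        rw [unif_apply_lt hab, Set.inter_eq_self_of_subset_right hsub, Real.volume_Icc]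
        exact ENNReal.inv_mul_cancel (by simp [hab]) ENNReal.ofReal_ne_top
      · rw [unif_apply_eq hab measurableSet_Iic,
          Set.indicator_of_mem
            (show leftLim F s ∈ Set.Iic t from le_trans (LleF s) hbt.le)]
        rfl
    have hg0 : ∀ s ∈ Set.Ioi q, ¬(F s = t ∧ leftLim F s = t) →
        unif (leftLim F s) (F s) (Set.Iic t) = 0 := by
      intro s hs hcon
      have hta : t ≤ leftLim F s := le_trans hFq (Fm.le_leftLim hs)
      by_cases hab : leftLim F s < F s
      · rw [unif_apply_lt hab]
        have hv : volume (Set.Iic t ∩ Set.Icc (leftLim F s) (F s)) = 0 := by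
          refine measure_mono_null (fun x hx => Set.mem_singleton_iff.2
            (le_antisymm hx.1 (le_trans hta hx.2.1))) Real.volume_singleton
        rw [hv, mul_zero]
      · rw [unif_apply_eq hab measurableSet_Iic, Set.indicator_of_notMem]
        simp only [Set.mem_Iic, not_le]
        have heqq : leftLim F s = F s := le_antisymm (LleF s) (not_lt.1 hab)
        refine lt_of_le_of_ne hta fun h => hcon ⟨?_, h.symm⟩
        rw [← heqq, ← h]
    have hsplit : (∫⁻ s, unif (leftLim F s) (F s) (Set.Iic t) ∂μ)
        = (∫⁻ s in Set.Iio q, unif (leftLim F s) (F s) (Set.Iic t) ∂μ)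
          + ((∫⁻ s in {q}, unif (leftLim F s) (F s) (Set.Iic t) ∂μ)
          + (∫⁻ s in Set.Ioi q, unif (leftLim F s) (F s) (Set.Iic t) ∂μ)) := by
      rw [← lintegral_union measurableSet_Ioi
        (Set.disjoint_singleton_left.2 (by simp)),
        Set.singleton_union, Set.Ioi_insert,
        ← lintegral_union measurableSet_Ici (Set.Iio_disjoint_Ici le_rfl),
        Set.Iio_union_Ici, Measure.restrict_univ]
    have h1 : (∫⁻ s in Set.Iio q, unif (leftLim F s) (F s) (Set.Iic t) ∂μ) = μ (Set.Iio q) := by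
      rw [setLIntegral_congr_fun_ae measurableSet_Iio (ae_of_all _ hg1), setLIntegral_one]
    have h2 : (∫⁻ s in {q}, unif (leftLim F s) (F s) (Set.Iic t) ∂μ)
        = unif (leftLim F q) (F q) (Set.Iic t) * μ {q} :=
      lintegral_singleton _ q
    have h3 : (∫⁻ s in Set.Ioi q, unif (leftLim F s) (F s) (Set.Iic t) ∂μ) = 0 := by
      have hae2 : ∀ᵐ s ∂μ, s ∈ Set.Ioi q → unif (leftLim F s) (F s) (Set.Iic t) = 0 := by
        filter_upwards [compl_mem_ae_iff.2 hnullE] with s hs hsq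
        exact hg0 s hsq (fun hcon => hs ⟨hsq, hcon⟩)
      rw [setLIntegral_congr_fun_ae measurableSet_Ioi hae2, lintegral_zero]
    rw [hsplit, h1, h2, h3, add_zero, hIio, hsing]
    by_cases hab : leftLim F q < F q
    · rw [unif_apply_lt hab]
      have hint : Set.Iic t ∩ Set.Icc (leftLim F q) (F q) = Set.Icc (leftLim F q) t := by
        ext x
        simp only [Set.mem_inter_iff, Set.mem_Iic, Set.mem_Icc]
        constructor
        · rintro ⟨hx1, hx2, hx3⟩; exact ⟨hx2, hx1⟩
        · rintro ⟨hx1, hx2⟩; exact ⟨hx2, hx1, le_trans hx2 hFq⟩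
      rw [hint, Real.volume_Icc,
        mul_comm ((ENNReal.ofReal (F q - leftLim F q))⁻¹ * ENNReal.ofReal (t - leftLim F q))
          (ENNReal.ofReal (F q - leftLim F q)),
        ← mul_assoc,
        ENNReal.mul_inv_cancel (by simp [hab]) ENNReal.ofReal_ne_top, one_mul,
        ← ENNReal.ofReal_add (Lnn q) (sub_nonneg.2 ha0t)]
      congr 1
      ring
    · have heqq : leftLim F q = F q := le_antisymm (LleF q) (not_lt.1 hab)
      have hqt : leftLim F q = t := by
        refine le_antisymm ha0t ?_
        rw [heqq]
        exact hFq
      rw [show F q - leftLim F q = 0 by rw [heqq, sub_self], ENNReal.ofReal_zero, mul_zero,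
        add_zero, hqt]

/-- composing a compactly supported μ with its cumulative distribution
transition F̃_μ (mapping s to the uniform distribution on [F_μ(s−), F_μ(s)]) yields the
uniform distribution on [0,1]. -/
theorem stmt16 (μ : Measure ℝ) [IsProbabilityMeasure μ]
    (S : Set ℝ) (hS : IsCompact S) (hμS : μ S = 1)
    (F : ℝ → ℝ) (hF : ∀ x : ℝ, F x = (μ (Set.Iic x)).toReal) :
    ∀ B : Set ℝ, MeasurableSet B →
      (∫⁻ s, unif (Function.leftLim F s) (F s) B ∂μ) = unif 0 1 B := by
  have hFc : F = ⇑(ProbabilityTheory.cdf μ) := funext fun x => by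
    rw [hF x, ProbabilityTheory.cdf_eq_real, measureReal_def]
  subst hFc
  intro B hB
  have hκm : Measurable (fun s : ℝ => unif (Function.leftLim (⇑(cdf μ)) s) (cdf μ s)) :=
    measurable_kernel (cdf μ).mono
  have hbind : ∀ C : Set ℝ, MeasurableSet C →
      (μ.bind fun s => unif (Function.leftLim (⇑(cdf μ)) s) (cdf μ s)) C
        = ∫⁻ s, unif (Function.leftLim (⇑(cdf μ)) s) (cdf μ s) C ∂μ :=
    fun C hC => Measure.bind_apply hC hκm.aemeasurable
  haveI hfin : IsFiniteMeasure
      (μ.bind fun s => unif (Function.leftLim (⇑(cdf μ)) s) (cdf μ s)) := by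
    constructor
    rw [hbind _ MeasurableSet.univ]
    have h1 : ∀ s : ℝ, unif (Function.leftLim (⇑(cdf μ)) s) (cdf μ s) Set.univ = 1 :=
      fun s => unif_univ ((cdf μ).mono.leftLim_le le_rfl)
    simp only [h1, lintegral_one, measure_univ]
    exact ENNReal.one_lt_top
  have hext : (μ.bind fun s => unif (Function.leftLim (⇑(cdf μ)) s) (cdf μ s)) = unif 0 1 := by
    refine MeasureTheory.Measure.ext_of_Iic _ _ fun a => ?_
    rw [hbind _ measurableSet_Iic]
    exact stmt16_Iic μ S hS hμS a
  rw [← hbind B hB, hext]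
end

section
/- Let ν be a probability measure on ℝ with compact support S and left-continuous quantile function Q_ν(p) = inf{s ∈ S : F_ν(s) ≥ p}. Then the pushforward of the uniform distribution on [0,1] under Q_ν equals ν. Consequently, for any compactly supported probability measure μ on ℝ, μ F̃_μ Q̃_ν = ν. -/
open MeasureTheory

section Aux

open Set Filter ProbabilityTheory Function
open scoped ENNReal Topology

lemma unif_isProb {a b : ℝ} (hab : a ≤ b) : IsProbabilityMeasure (unif a b) := by
  rw [unif]
  split_ifs with h
  · constructor
    rw [Measure.smul_apply, Measure.restrict_apply MeasurableSet.univ, Set.univ_inter,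
      Real.volume_Icc, smul_eq_mul]
    exact ENNReal.inv_mul_cancel (ENNReal.ofReal_pos.2 (sub_pos.2 h)).ne' ENNReal.ofReal_ne_top
  · infer_instance

lemma unif_Iic_full {a b x : ℝ} (hab : a ≤ b) (hbx : b ≤ x) : unif a b (Set.Iic x) = 1 := by
  rw [unif]
  split_ifs with h
  · have hss : Set.Icc a b ⊆ Set.Iic x := fun t ht => le_trans ht.2 hbx
    have heq : Set.Iic x ∩ Set.Icc a b = Set.Icc a b :=
      Set.inter_eq_self_of_subset_right hss
    rw [Measure.smul_apply, Measure.restrict_apply measurableSet_Iic, heq, Real.volume_Icc,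
      smul_eq_mul]
    exact ENNReal.inv_mul_cancel (ENNReal.ofReal_pos.2 (sub_pos.2 h)).ne' ENNReal.ofReal_ne_top
  · have hmem : a ∈ Set.Iic x := le_trans hab hbx
    rw [Measure.dirac_apply' _ measurableSet_Iic, Set.indicator_of_mem hmem]
    rfl

lemma unif_Iic_zero {a b x : ℝ} (hxa : x < a) : unif a b (Set.Iic x) = 0 := by
  rw [unif]
  split_ifs with h
  · rw [Measure.smul_apply, Measure.restrict_apply measurableSet_Iic]
    have : Set.Iic x ∩ Set.Icc a b = ∅ := by
      ext t
      simp only [Set.mem_inter_iff, Set.mem_Iic, Set.mem_Icc, Set.mem_empty_iff_false,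
        iff_false, not_and]
      intro h1 h2
      linarith [h2]
    rw [this, measure_empty, smul_eq_mul, mul_zero]
  · rw [Measure.dirac_apply' _ measurableSet_Iic,
      Set.indicator_of_notMem (by simpa using not_le.2 hxa)]

lemma isClosed_cdf_superlevel (μ : Measure ℝ) (p : ℝ) : IsClosed {s : ℝ | p ≤ cdf μ s} := by
  rw [← isOpen_compl_iff, isOpen_iff_mem_nhds]
  intro s hs
  simp only [Set.mem_compl_iff, Set.mem_setOf_eq, not_le] at hs
  have h1 : {t : ℝ | cdf μ t < p} ∈ 𝓝[≥] s := ((cdf μ).right_continuous s) (Iio_mem_nhds hs)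
  rw [mem_nhdsGE_iff_exists_Ico_subset] at h1
  obtain ⟨u, hu, hsub⟩ := h1
  refine Filter.mem_of_superset (Iio_mem_nhds hu) fun t ht => ?_
  simp only [Set.mem_compl_iff, Set.mem_setOf_eq, not_le]
  rcases le_or_gt s t with h | h
  · exact hsub ⟨h, ht⟩
  · exact lt_of_le_of_lt ((cdf μ).mono h.le) hs

lemma compl_null (μ : Measure ℝ) [IsProbabilityMeasure μ] {S : Set ℝ} (hS : IsCompact S)
    (hμS : μ S = 1) : μ Sᶜ = 0 := by
  rw [measure_compl hS.isClosed.measurableSet (measure_ne_top μ S), hμS, measure_univ,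
    tsub_self]

lemma exists_rep (μ : Measure ℝ) [IsProbabilityMeasure μ] {S : Set ℝ} (hS : IsCompact S)
    (hμS : μ S = 1) {s : ℝ} (h : μ (Set.Iic s) ≠ 0) :
    ∃ t, t ∈ S ∧ t ≤ s ∧ cdf μ t = cdf μ s := by
  have hTc : IsCompact (S ∩ Set.Iic s) := hS.inter_right isClosed_Iic
  have hTne : (S ∩ Set.Iic s).Nonempty := by
    by_contra hc
    rw [Set.not_nonempty_iff_eq_empty] at hc
    refine h (le_antisymm ?_ zero_le)
    have hsub : Set.Iic s ⊆ Sᶜ := fun t ht hts => (Set.eq_empty_iff_forall_notMem.1 hc) t ⟨hts, ht⟩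
    calc μ (Set.Iic s) ≤ μ Sᶜ := measure_mono hsub
    _ = 0 := compl_null μ hS hμS
  set t := sSup (S ∩ Set.Iic s) with ht_def
  have htmem : t ∈ S ∩ Set.Iic s := hTc.sSup_mem hTne
  refine ⟨t, htmem.1, htmem.2, ?_⟩
  have hIoc : μ (Set.Ioc t s) = 0 := by
    refine measure_mono_null (fun u hu => ?_) (compl_null μ hS hμS)
    intro huS
    exact absurd (le_csSup hTc.bddAbove ⟨huS, hu.2⟩) (not_le.2 hu.1)
  rw [← measure_cdf μ, StieltjesFunction.measure_Ioc] at hIoc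
  rw [ENNReal.ofReal_eq_zero, sub_nonpos] at hIoc
  exact le_antisymm ((cdf μ).mono htmem.2) hIoc

lemma sSup_mem_cdf_one (μ : Measure ℝ) [IsProbabilityMeasure μ] {S : Set ℝ} (hS : IsCompact S)
    (hμS : μ S = 1) : sSup S ∈ S ∧ cdf μ (sSup S) = 1 := by
  have hSne : S.Nonempty := by
    by_contra hc
    rw [Set.not_nonempty_iff_eq_empty] at hc
    rw [hc, measure_empty] at hμS
    exact zero_ne_one hμS
  have hmem : sSup S ∈ S := hS.sSup_mem hSne
  refine ⟨hmem, ?_⟩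
  have h1 : μ (Set.Iic (sSup S)) = 1 := by
    refine le_antisymm prob_le_one ?_
    calc (1 : ℝ≥0∞) = μ S := hμS.symm
    _ ≤ μ (Set.Iic (sSup S)) := measure_mono fun t ht => le_csSup hS.bddAbove ht
  rw [cdf_eq_real, measureReal_def, h1, ENNReal.toReal_one]

/-- Part 1: inverse transform sampling. -/
lemma part1 (S : Set ℝ) (hS : IsCompact S) (ν : Measure ℝ) [IsProbabilityMeasure ν]
    (hνS : ν S = 1)
    (Q : ℝ → ℝ) (hQ : ∀ p : ℝ, Q p = sInf {s : ℝ | s ∈ S ∧ p ≤ cdf ν s}) :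
    Measurable Q ∧ ∀ B : Set ℝ, MeasurableSet B → unif 0 1 (Q ⁻¹' B) = ν B := by
  obtain ⟨hbS, hFb⟩ := sSup_mem_cdf_one ν hS hνS
  set b := sSup S
  have hAne : ∀ p : ℝ, p ≤ 1 → {s : ℝ | s ∈ S ∧ p ≤ cdf ν s}.Nonempty :=
    fun p hp => ⟨b, hbS, by rw [hFb]; exact hp⟩
  have hAclosed : ∀ p : ℝ, IsClosed {s : ℝ | s ∈ S ∧ p ≤ cdf ν s} := fun p =>
    hS.isClosed.inter (isClosed_cdf_superlevel ν p)
  have hAbdd : ∀ p : ℝ, BddBelow {s : ℝ | s ∈ S ∧ p ≤ cdf ν s} := by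
    intro p
    obtain ⟨c, hc⟩ := hS.bddBelow
    exact ⟨c, fun t ht => hc ht.1⟩
  have galois1 : ∀ p x : ℝ, 0 < p → p ≤ 1 → Q p ≤ x → p ≤ cdf ν x := by
    intro p x _ hp1 hQx
    have hmem : Q p ∈ {s : ℝ | s ∈ S ∧ p ≤ cdf ν s} := by
      rw [hQ p]
      exact (hAclosed p).csInf_mem (hAne p hp1) (hAbdd p)
    exact le_trans hmem.2 ((cdf ν).mono hQx)
  have galois2 : ∀ p x : ℝ, 0 < p → p ≤ cdf ν x → Q p ≤ x := by
    intro p x hp0 hpx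
    have h0 : ν (Set.Iic x) ≠ 0 := by
      rw [← ofReal_cdf]
      exact (ENNReal.ofReal_pos.2 (lt_of_lt_of_le hp0 hpx)).ne'
    obtain ⟨t, htS, hts, htF⟩ := exists_rep ν hS hνS h0
    have htmem : t ∈ {s : ℝ | s ∈ S ∧ p ≤ cdf ν s} := ⟨htS, by rw [htF]; exact hpx⟩
    calc Q p ≤ t := by rw [hQ p]; exact csInf_le (hAbdd p) htmem
    _ ≤ x := hts
  -- measurability of Q
  have hQcmono : Monotone (fun p => Q (min p 1)) := by
    intro p q hpq
    simp only
    rw [hQ, hQ]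
    refine csInf_le_csInf (hAbdd _) (hAne _ (min_le_right q 1)) fun s hs => ?_
    exact ⟨hs.1, le_trans (min_le_min hpq le_rfl) hs.2⟩
  have hQeq : Q = fun p => if p ≤ 1 then Q (min p 1) else 0 := by
    funext p
    by_cases hp : p ≤ 1
    · rw [if_pos hp, min_eq_left hp]
    · rw [if_neg hp]
      rw [hQ p]
      have : {s : ℝ | s ∈ S ∧ p ≤ cdf ν s} = ∅ := by
        rw [Set.eq_empty_iff_forall_notMem]
        intro s hs
        exact hp (le_trans hs.2 (cdf_le_one ν s))
      rw [this, Real.sInf_empty]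
  have hQm : Measurable Q := by
    rw [hQeq]
    exact Measurable.ite measurableSet_Iic hQcmono.measurable measurable_const
  refine ⟨hQm, ?_⟩
  have hu01 : unif 0 1 = volume.restrict (Set.Icc 0 1) := by
    rw [unif, if_pos zero_lt_one, sub_zero, ENNReal.ofReal_one, inv_one, one_smul]
  have hprob01 : IsProbabilityMeasure (unif 0 1) := unif_isProb zero_le_one
  have hMprob : IsProbabilityMeasure ((unif 0 1).map Q) :=
    Measure.isProbabilityMeasure_map hQm.aemeasurable
  have hM : (unif 0 1).map Q = ν := by
    refine Measure.ext_of_Iic ((unif 0 1).map Q) ν fun x => ?_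
    rw [Measure.map_apply hQm measurableSet_Iic, hu01,
      Measure.restrict_apply (hQm measurableSet_Iic)]
    have hFx0 : 0 ≤ cdf ν x := cdf_nonneg ν x
    have hFx1 : cdf ν x ≤ 1 := cdf_le_one ν x
    have hν : ν (Set.Iic x) = ENNReal.ofReal (cdf ν x) := (ofReal_cdf ν x).symm
    refine le_antisymm ?_ ?_
    · have hsub : Q ⁻¹' Set.Iic x ∩ Set.Icc 0 1 ⊆ Set.Icc 0 (cdf ν x) ∪ {0} := by
        rintro p ⟨hpE, hp0, hp1⟩
        rcases eq_or_lt_of_le hp0 with h | h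
        · exact Or.inr (by simp [← h])
        · exact Or.inl ⟨hp0, galois1 p x h hp1 hpE⟩
      calc volume (Q ⁻¹' Set.Iic x ∩ Set.Icc 0 1) ≤ volume (Set.Icc 0 (cdf ν x) ∪ {0}) :=
            measure_mono hsub
      _ ≤ volume (Set.Icc 0 (cdf ν x)) + volume ({0} : Set ℝ) := measure_union_le _ _
      _ = ENNReal.ofReal (cdf ν x) := by
            rw [Real.volume_Icc, Real.volume_singleton, add_zero, sub_zero]
      _ = ν (Set.Iic x) := hν.symm
    · have hsub : Set.Ioc 0 (cdf ν x) ⊆ Q ⁻¹' Set.Iic x ∩ Set.Icc 0 1 := by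
        rintro p ⟨hp0, hpF⟩
        exact ⟨galois2 p x hp0 hpF, le_of_lt hp0, le_trans hpF hFx1⟩
      calc ν (Set.Iic x) = ENNReal.ofReal (cdf ν x) := hν
      _ = volume (Set.Ioc 0 (cdf ν x)) := by rw [Real.volume_Ioc, sub_zero]
      _ ≤ volume (Q ⁻¹' Set.Iic x ∩ Set.Icc 0 1) := measure_mono hsub
  intro B hB
  rw [← hM, Measure.map_apply hQm hB]

/-- Part 2: the distributional transform of `μ` is uniform on `[0,1]`. -/
lemma part2 (μ : Measure ℝ) [IsProbabilityMeasure μ] (S : Set ℝ) (hS : IsCompact S)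
    (hμS : μ S = 1) {A : Set ℝ} (hA : MeasurableSet A) :
    ∫⁻ s, unif (Function.leftLim (⇑(cdf μ)) s) (cdf μ s) A ∂μ = unif 0 1 A := by
  have hmono : Monotone (⇑(cdf μ)) := (cdf μ).mono
  set lF : ℝ → ℝ := Function.leftLim (⇑(cdf μ)) with hlF_def
  have hlF_le : ∀ s, lF s ≤ cdf μ s := fun s => hmono.leftLim_le le_rfl
  have hlF0 : ∀ s, 0 ≤ lF s := fun s =>
    le_trans (cdf_nonneg μ (s - 1)) (hmono.le_leftLim (by linarith))
  have hFm : Measurable (⇑(cdf μ)) := hmono.measurable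
  have hlFm : Measurable lF := hmono.leftLim.measurable
  have hmu : (cdf μ).measure = μ := measure_cdf μ
  set k : ℝ → Measure ℝ := fun s => unif (lF s) (cdf μ s) with hk_def
  have hkprob : ∀ s, IsProbabilityMeasure (k s) := fun s => unif_isProb (hlF_le s)
  -- measurability of the kernel
  have hk : Measurable k := by
    refine Measure.measurable_of_measurable_coe _ fun C hC => ?_
    have hrep : ∀ s : ℝ, k s C = if lF s < cdf μ s then
        (ENNReal.ofReal (cdf μ s - lF s))⁻¹ *
          (volume ((C ∩ Set.Icc (-1) 2) ∩ Set.Iic (cdf μ s)) -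
            volume ((C ∩ Set.Icc (-1) 2) ∩ Set.Iio (lF s)))
        else (C.indicator (fun _ => (1:ℝ≥0∞)) (lF s)) := by
      intro s
      rw [hk_def]
      simp only
      rw [unif]
      split_ifs with h
      · rw [Measure.smul_apply, Measure.restrict_apply hC, smul_eq_mul]
        congr 1
        have hseteq : C ∩ Set.Icc (lF s) (cdf μ s) =
            ((C ∩ Set.Icc (-1) 2) ∩ Set.Iic (cdf μ s)) \
              ((C ∩ Set.Icc (-1) 2) ∩ Set.Iio (lF s)) := by
          ext t
          simp only [Set.mem_inter_iff, Set.mem_Icc, Set.mem_diff, Set.mem_Iic, Set.mem_Iio,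
            not_and, not_lt]
          constructor
          · rintro ⟨htC, h1, h2⟩
            have h0 : (0:ℝ) ≤ lF s := hlF0 s
            have hle1 : cdf μ s ≤ 1 := cdf_le_one μ s
            refine ⟨⟨⟨htC, by constructor <;> linarith⟩, h2⟩, fun _ => h1⟩
          · rintro ⟨⟨⟨htC, _⟩, h2⟩, h3⟩
            exact ⟨htC, h3 ⟨htC, by constructor <;> linarith [h2]⟩, h2⟩
        rw [hseteq]
        refine measure_diff (Set.inter_subset_inter_right _ fun t ht =>
            le_trans (le_of_lt ht) (hlF_le s))
          ((hC.inter measurableSet_Icc).inter measurableSet_Iio).nullMeasurableSet ?_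
        refine ne_top_of_le_ne_top ?_ (measure_mono (fun t ht => ht.1.2))
        rw [Real.volume_Icc]
        exact ENNReal.ofReal_ne_top
      · rw [Measure.dirac_apply' _ hC]
        rfl
    simp only [hrep]
    have hmono1 : Monotone (fun b : ℝ => volume ((C ∩ Set.Icc (-1) 2) ∩ Set.Iic b)) :=
      fun p q hpq => measure_mono (Set.inter_subset_inter_right _ (Set.Iic_subset_Iic.2 hpq))
    have hmono2 : Monotone (fun b : ℝ => volume ((C ∩ Set.Icc (-1) 2) ∩ Set.Iio b)) :=
      fun p q hpq => measure_mono (Set.inter_subset_inter_right _ (Set.Iio_subset_Iio hpq))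
    refine Measurable.ite (measurableSet_lt hlFm hFm) ?_ ?_
    · exact ((ENNReal.measurable_ofReal.comp (hFm.sub hlFm)).inv).mul
        ((hmono1.measurable.comp hFm).sub (hmono2.measurable.comp hlFm))
    · exact (measurable_one.indicator hC).comp hlFm
  have hmA : ∀ C : Set ℝ, MeasurableSet C → (μ.bind k) C = ∫⁻ s, k s C ∂μ :=
    fun C hC => Measure.bind_apply hC hk.aemeasurable
  have hmprob : IsProbabilityMeasure (μ.bind k) := by
    constructor
    rw [hmA _ MeasurableSet.univ]
    have h1 : ∀ s : ℝ, k s Set.univ = 1 := fun s => (hkprob s).measure_univ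
    simp only [h1]
    rw [lintegral_one, measure_univ]
  have hprob01 : IsProbabilityMeasure (unif 0 1) := unif_isProb zero_le_one
  have hm_eq : μ.bind k = unif 0 1 := by
    refine Measure.ext_of_Iic (μ.bind k) (unif 0 1) fun x => ?_
    rw [hmA _ measurableSet_Iic]
    rcases lt_or_ge x 0 with hx0 | hx0
    · have h1 : ∀ s : ℝ, k s (Set.Iic x) = 0 :=
        fun s => unif_Iic_zero (lt_of_lt_of_le hx0 (hlF0 s))
      simp only [h1]
      rw [lintegral_zero, unif_Iic_zero hx0]
    rcases le_or_gt 1 x with hx1 | hx1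
    · have h1 : ∀ s : ℝ, k s (Set.Iic x) = 1 :=
        fun s => unif_Iic_full (hlF_le s) (le_trans (cdf_le_one μ s) hx1)
      simp only [h1]
      rw [lintegral_one, measure_univ, unif_Iic_full zero_le_one hx1]
    -- main case : 0 ≤ x < 1
    obtain ⟨hbS, hFb⟩ := sSup_mem_cdf_one μ hS hμS
    set b := sSup S
    set T := {s : ℝ | s ∈ S ∧ x ≤ cdf μ s} with hT_def
    have hTne : T.Nonempty := ⟨b, hbS, by rw [hFb]; exact hx1.le⟩
    have hTclosed : IsClosed T := hS.isClosed.inter (isClosed_cdf_superlevel μ x)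
    have hTbdd : BddBelow T := by
      obtain ⟨c, hc⟩ := hS.bddBelow
      exact ⟨c, fun t ht => hc ht.1⟩
    set a := sInf T with ha_def
    have haT : a ∈ T := hTclosed.csInf_mem hTne hTbdd
    have haF : x ≤ cdf μ a := haT.2
    have hFlt : ∀ s, s < a → cdf μ s ≤ x := by
      intro s hs
      by_contra hc
      push_neg at hc
      have h0 : μ (Set.Iic s) ≠ 0 := by
        rw [← ofReal_cdf]
        exact (ENNReal.ofReal_pos.2 (lt_of_le_of_lt hx0 hc)).ne'
      obtain ⟨t, htS, hts, htF⟩ := exists_rep μ hS hμS h0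
      have htT : t ∈ T := ⟨htS, by rw [htF]; exact le_of_lt hc⟩
      have : a ≤ t := csInf_le hTbdd htT
      linarith
    have hlFa : lF a ≤ x :=
      le_of_tendsto (hmono.tendsto_leftLim a)
        (eventually_nhdsWithin_of_forall fun s hs => hFlt s hs)
    have hmu_singleton : ∀ c : ℝ, μ {c} = ENNReal.ofReal (cdf μ c - lF c) := by
      intro c
      conv_lhs => rw [← hmu]
      rw [StieltjesFunction.measure_singleton]
    have hmu_Ioc : ∀ c d : ℝ, μ (Set.Ioc c d) = ENNReal.ofReal (cdf μ d - cdf μ c) := by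
      intro c d
      conv_lhs => rw [← hmu]
      rw [StieltjesFunction.measure_Ioc]
    have hmu_Ioo : ∀ c d : ℝ, μ (Set.Ioo c d) = ENNReal.ofReal (lF d - cdf μ c) := by
      intro c d
      conv_lhs => rw [← hmu]
      rw [StieltjesFunction.measure_Ioo]
    have hmuIio : μ (Set.Iio a) = ENNReal.ofReal (lF a) := by
      have h1 : Set.Iio a = Set.Iic a \ {a} := by
        ext t; simp [Set.mem_diff, lt_iff_le_and_ne]
      have hsub : {a} ⊆ Set.Iic a := Set.singleton_subset_iff.2 Set.self_mem_Iic
      rw [h1, measure_diff hsub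
        (measurableSet_singleton a).nullMeasurableSet (measure_ne_top μ _), hmu_singleton a,
        ← ofReal_cdf μ a, ← ENNReal.ofReal_sub _ (sub_nonneg.2 (hlF_le a))]
      congr 1
      ring
    -- split the integral
    have hsplit1 : ∫⁻ s, k s (Set.Iic x) ∂μ =
        (∫⁻ s in Set.Iic a, k s (Set.Iic x) ∂μ) + ∫⁻ s in Set.Ioi a, k s (Set.Iic x) ∂μ := by
      rw [← Set.compl_Iic]
      exact (lintegral_add_compl _ measurableSet_Iic).symm
    have hsplit2 : ∫⁻ s in Set.Iic a, k s (Set.Iic x) ∂μ =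
        (∫⁻ s in Set.Iio a, k s (Set.Iic x) ∂μ) + ∫⁻ s in {a}, k s (Set.Iic x) ∂μ := by
      rw [← lintegral_union (measurableSet_singleton a)
        (by simp [Set.disjoint_singleton_right]), Set.Iio_union_right]
    have hIio : ∫⁻ s in Set.Iio a, k s (Set.Iic x) ∂μ = ENNReal.ofReal (lF a) := by
      rw [setLIntegral_congr_fun measurableSet_Iio
        (fun s hs => unif_Iic_full (hlF_le s) (hFlt s hs)),
        setLIntegral_one, hmuIio]
    have hsing : ∫⁻ s in {a}, k s (Set.Iic x) ∂μ = ENNReal.ofReal (x - lF a) := by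
      rw [lintegral_singleton]
      have hmua : μ {a} = ENNReal.ofReal (cdf μ a - lF a) := hmu_singleton a
      rcases eq_or_lt_of_le (hlF_le a) with heq | hlt
      · have hxa : x = lF a := le_antisymm (heq ▸ haF) hlFa
        rw [hmua, ← heq, sub_self, ENNReal.ofReal_zero, mul_zero, hxa, sub_self,
          ENNReal.ofReal_zero]
      · have hka : k a (Set.Iic x) =
            (ENNReal.ofReal (cdf μ a - lF a))⁻¹ * ENNReal.ofReal (x - lF a) := by
          rw [hk_def]
          simp only
          rw [unif, if_pos hlt, Measure.smul_apply, Measure.restrict_apply measurableSet_Iic,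
            smul_eq_mul]
          congr 1
          have : Set.Iic x ∩ Set.Icc (lF a) (cdf μ a) = Set.Icc (lF a) x := by
            ext t
            simp only [Set.mem_inter_iff, Set.mem_Iic, Set.mem_Icc]
            constructor
            · rintro ⟨h1, h2, _⟩; exact ⟨h2, h1⟩
            · rintro ⟨h1, h2⟩; exact ⟨h2, h1, le_trans h2 haF⟩
          rw [this, Real.volume_Icc]
        rw [hka, hmua, mul_comm, ← mul_assoc,
          ENNReal.mul_inv_cancel (ENNReal.ofReal_pos.2 (sub_pos.2 hlt)).ne'
            ENNReal.ofReal_ne_top, one_mul]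
    have hIoi : ∫⁻ s in Set.Ioi a, k s (Set.Iic x) ∂μ = 0 := by
      have hW : MeasurableSet {s : ℝ | cdf μ s ≤ x} := hFm measurableSet_Iic
      have hbound : ∀ s ∈ Set.Ioi a, k s (Set.Iic x) ≤
          ({s : ℝ | cdf μ s ≤ x}).indicator (fun _ => (1:ℝ≥0∞)) s := by
        intro s hs
        by_cases hFs : cdf μ s ≤ x
        · rw [Set.indicator_of_mem (show s ∈ {s : ℝ | cdf μ s ≤ x} from hFs)]
          exact prob_le_one
        · rw [Set.indicator_of_notMem (show s ∉ {s : ℝ | cdf μ s ≤ x} from hFs)]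
          push_neg at hFs
          have hxlF : x ≤ lF s := le_trans haF (hmono.le_leftLim hs)
          rw [hk_def]
          simp only
          rw [unif]
          split_ifs with h
          · rw [Measure.smul_apply, Measure.restrict_apply measurableSet_Iic, smul_eq_mul]
            have hsub : Set.Iic x ∩ Set.Icc (lF s) (cdf μ s) ⊆ {lF s} := by
              rintro t ⟨h1, h2, _⟩
              exact le_antisymm (le_trans h1 hxlF) h2
            rw [measure_mono_null hsub Real.volume_singleton, mul_zero]
          · rw [Measure.dirac_apply' _ measurableSet_Iic, Set.indicator_of_notMem]
            simp only [Set.mem_Iic, not_le]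
            push_neg at h
            linarith
      have hle : ∫⁻ s in Set.Ioi a, k s (Set.Iic x) ∂μ ≤ μ ({s : ℝ | cdf μ s ≤ x} ∩ Set.Ioi a) := by
        calc ∫⁻ s in Set.Ioi a, k s (Set.Iic x) ∂μ
            ≤ ∫⁻ s in Set.Ioi a, ({s : ℝ | cdf μ s ≤ x}).indicator (fun _ => (1:ℝ≥0∞)) s ∂μ :=
              lintegral_mono_ae (ae_restrict_of_forall_mem measurableSet_Ioi hbound)
        _ = ∫⁻ s in {s : ℝ | cdf μ s ≤ x}, (fun _ => (1:ℝ≥0∞)) s ∂(μ.restrict (Set.Ioi a)) :=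
              lintegral_indicator hW _
        _ = (μ.restrict (Set.Ioi a)) {s : ℝ | cdf μ s ≤ x} := setLIntegral_one _
        _ = μ ({s : ℝ | cdf μ s ≤ x} ∩ Set.Ioi a) := Measure.restrict_apply hW
      refine le_antisymm (le_trans hle (le_of_eq ?_)) zero_le
      set V := {s : ℝ | cdf μ s ≤ x} ∩ Set.Ioi a with hV_def
      rcases Set.eq_empty_or_nonempty V with hVe | hVne
      · rw [hVe, measure_empty]
      · have hFa : cdf μ a = x := by
          obtain ⟨c, hc⟩ := hVne
          exact le_antisymm (le_trans (hmono (le_of_lt hc.2)) hc.1) haF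
        have hVbdd : BddAbove V := by
          refine ⟨b, fun c hc => ?_⟩
          by_contra hcb
          push_neg at hcb
          have : (1:ℝ) ≤ x := hFb ▸ le_trans (hmono hcb.le) hc.1
          linarith
        set e := sSup V with he_def
        have hce : ∀ c ∈ V, c ≤ e := fun c hc => le_csSup hVbdd hc
        by_cases hFe : cdf μ e ≤ x
        · have hVsub : V ⊆ Set.Ioc a e := fun c hc => ⟨hc.2, hce c hc⟩
          refine measure_mono_null hVsub ?_
          rw [hmu_Ioc, ENNReal.ofReal_eq_zero]
          linarith
        · push_neg at hFe
          have hVsub : V ⊆ Set.Ioo a e := by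
            intro c hc
            refine ⟨hc.2, lt_of_le_of_ne (hce c hc) fun h => ?_⟩
            rw [h] at hc
            exact absurd hc.1 (not_le.2 hFe)
          have hlFe : lF e ≤ x := by
            refine le_of_tendsto (hmono.tendsto_leftLim e)
              (eventually_nhdsWithin_of_forall fun s hs => ?_)
            obtain ⟨c, hcV, hsc⟩ := exists_lt_of_lt_csSup hVne hs
            exact le_trans (hmono hsc.le) hcV.1
          refine measure_mono_null hVsub ?_
          rw [hmu_Ioo, ENNReal.ofReal_eq_zero]
          linarith
    rw [hsplit1, hsplit2, hIio, hsing, hIoi, add_zero,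
      ← ENNReal.ofReal_add (hlF0 a) (sub_nonneg.2 hlFa)]
    have hru : unif 0 1 (Set.Iic x) = ENNReal.ofReal x := by
      rw [unif, if_pos zero_lt_one, sub_zero, ENNReal.ofReal_one, inv_one, one_smul,
        Measure.restrict_apply measurableSet_Iic]
      have : Set.Iic x ∩ Set.Icc 0 1 = Set.Icc 0 x := by
        ext t
        simp only [Set.mem_inter_iff, Set.mem_Iic, Set.mem_Icc]
        constructor
        · rintro ⟨h1, h2, _⟩; exact ⟨h2, h1⟩
        · rintro ⟨h1, h2⟩; exact ⟨h2, h1, by linarith⟩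
      rw [this, Real.volume_Icc, sub_zero]
    rw [hru]
    congr 1
    ring
  calc ∫⁻ s, unif (Function.leftLim (⇑(cdf μ)) s) (cdf μ s) A ∂μ = (μ.bind k) A :=
        (hmA A hA).symm
  _ = unif 0 1 A := by rw [hm_eq]

end Aux

/-- the pushforward of the uniform distribution on [0,1] under the
quantile function Q_ν equals ν; consequently μ F̃_μ Q̃_ν = ν for any compactly
supported probability measure μ. -/
theorem stmt17 (S : Set ℝ) (hS : IsCompact S)
    (ν : Measure ℝ) [IsProbabilityMeasure ν] (hνS : ν S = 1)
    (μ : Measure ℝ) [IsProbabilityMeasure μ]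
    (Sμ : Set ℝ) (hSμ : IsCompact Sμ) (hμS : μ Sμ = 1)
    (Fν Fμ : ℝ → ℝ)
    (hFν : ∀ x : ℝ, Fν x = (ν (Set.Iic x)).toReal)
    (hFμ : ∀ x : ℝ, Fμ x = (μ (Set.Iic x)).toReal)
    (Q : ℝ → ℝ) (hQ : ∀ p : ℝ, Q p = sInf {s : ℝ | s ∈ S ∧ p ≤ Fν s}) :
    (∀ B : Set ℝ, MeasurableSet B → unif 0 1 (Q ⁻¹' B) = ν B) ∧
    (∀ B : Set ℝ, MeasurableSet B →
      (∫⁻ s, unif (Function.leftLim Fμ s) (Fμ s) (Q ⁻¹' B) ∂μ) = ν B) := by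
  have hFν' : Fν = ⇑(ProbabilityTheory.cdf ν) := funext fun x => by
    rw [hFν x, ProbabilityTheory.cdf_eq_real, measureReal_def]
  have hFμ' : Fμ = ⇑(ProbabilityTheory.cdf μ) := funext fun x => by
    rw [hFμ x, ProbabilityTheory.cdf_eq_real, measureReal_def]
  subst hFν' hFμ'
  obtain ⟨hQm, h1⟩ := part1 S hS ν hνS Q hQ
  refine ⟨h1, fun B hB => ?_⟩
  rw [part2 μ Sμ hSμ hμS (hQm hB)]
  exact h1 B hB
end

section
/- Let μ, ν be probability measures on a compact subset S ⊂ ℝ with μ ≥_SD ν. Then the composed transition k = F̃_μ Q̃_ν (first apply the distribution transition of μ, then the quantile transition of ν) is a downward transition on S, i.e., k(s, (−∞,s] ∩ S) = 1 for all s ∈ S. -/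
open MeasureTheory

/-- if μ ≥_SD ν (i.e. F_μ ≤ F_ν pointwise) for probability measures on a
compact S ⊂ ℝ, then the composed transition k = F̃_μ Q̃_ν is downward:
k(s, (−∞,s] ∩ S) = 1 for all s ∈ S. -/
theorem stmt18 (S : Set ℝ) (hS : IsCompact S) (μ ν : Measure ℝ)
    [IsProbabilityMeasure μ] [IsProbabilityMeasure ν]
    (hμS : μ S = 1) (hνS : ν S = 1)
    (hdom : ∀ x : ℝ, μ (Set.Iic x) ≤ ν (Set.Iic x))
    (Fμ Fν : ℝ → ℝ)
    (hFμ : ∀ x : ℝ, Fμ x = (μ (Set.Iic x)).toReal)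
    (hFν : ∀ x : ℝ, Fν x = (ν (Set.Iic x)).toReal)
    (Q : ℝ → ℝ) (hQ : ∀ p : ℝ, Q p = sInf {t : ℝ | t ∈ S ∧ p ≤ Fν t}) :
    ∀ s ∈ S, unif (Function.leftLim Fμ s) (Fμ s) (Q ⁻¹' (Set.Iic s ∩ S)) = 1 := by
  intro s hs
  have hSc : IsClosed S := hS.isClosed
  have hSb : BddBelow S := hS.isBounded.bddBelow
  have hle : Fμ s ≤ Fν s := by
    rw [hFμ, hFν]
    exact ENNReal.toReal_mono (measure_lt_top ν _).ne (hdom s)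
  have hmono : Monotone Fμ := fun x y hxy => by
    rw [hFμ, hFμ]
    exact ENNReal.toReal_mono (measure_lt_top μ _).ne
      (measure_mono (Set.Iic_subset_Iic.2 hxy))
  set a := Function.leftLim Fμ s with ha
  set b := Fμ s with hb
  have hab : a ≤ b := hmono.leftLim_le le_rfl
  -- key inclusion
  have hkey : Set.Iic (Fν s) ⊆ Q ⁻¹' (Set.Iic s ∩ S) := by
    intro p hp
    have hsT : s ∈ {t : ℝ | t ∈ S ∧ p ≤ Fν t} := ⟨hs, hp⟩
    have hTsub : {t : ℝ | t ∈ S ∧ p ≤ Fν t} ⊆ S := fun t ht => ht.1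
    have hbdd : BddBelow {t : ℝ | t ∈ S ∧ p ≤ Fν t} := hSb.mono hTsub
    refine Set.mem_preimage.mpr ⟨?_, ?_⟩
    · rw [Set.mem_Iic, hQ]
      exact csInf_le hbdd hsT
    · rw [hQ]
      have h1 := csInf_mem_closure ⟨s, hsT⟩ hbdd
      have h2 := closure_mono hTsub h1
      rwa [hSc.closure_eq] at h2
  rw [unif]
  by_cases h : a < b
  · rw [if_pos h]
    have hne0 : ENNReal.ofReal (b - a) ≠ 0 := by
      simp [ENNReal.ofReal_eq_zero, sub_pos, h, not_le.mpr h]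
    have htot : ∀ X : Set ℝ, Set.Icc a b ⊆ X → MeasurableSet X →
        ((ENNReal.ofReal (b - a))⁻¹ • volume.restrict (Set.Icc a b)) X = 1 := by
      intro X hX hXm
      rw [Measure.smul_apply, Measure.restrict_apply hXm,
        Set.inter_eq_right.mpr hX, Real.volume_Icc, smul_eq_mul]
      exact ENNReal.inv_mul_cancel hne0 ENNReal.ofReal_ne_top
    have hIcc : Set.Icc a b ⊆ Set.Iic (Fν s) := fun x hx => le_trans hx.2 hle
    refine le_antisymm ?_ ?_
    · calc ((ENNReal.ofReal (b - a))⁻¹ • volume.restrict (Set.Icc a b))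
            (Q ⁻¹' (Set.Iic s ∩ S))
          ≤ ((ENNReal.ofReal (b - a))⁻¹ • volume.restrict (Set.Icc a b)) Set.univ :=
            measure_mono (Set.subset_univ _)
        _ = 1 := htot _ (Set.subset_univ _) MeasurableSet.univ
    · calc (1 : ENNReal)
          = ((ENNReal.ofReal (b - a))⁻¹ • volume.restrict (Set.Icc a b))
              (Set.Iic (Fν s)) := (htot _ hIcc measurableSet_Iic).symm
        _ ≤ _ := measure_mono hkey
  · rw [if_neg h]
    exact Measure.dirac_apply_of_mem (hkey (le_trans hab hle))
end
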